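/- arXiv:1004.0327 — 8 statements merged into one kernel-verified Lean document; each statement's English description precedes it below -/
import Mathlib

section
/- Let a and s be integers with a ≥ 2 and s ≥ 2, and set g = (s+1)a and m = s(a+1). Equip ℤ² with the symmetric bilinear form ⟨(x₁,y₁),(x₂,y₂)⟩ = (2s−2)x₁x₂ + m(x₁y₂ + x₂y₁) + (2g−2)y₁y₂, and write L = (1,0), Λ = (0,1). Let α, β be integers and set M = (α,β) and N = (1−α,−β), so that M + N = L. If ⟨M,M⟩ ≥ 0, ⟨N,N⟩ ≥ 0, ⟨M,Λ⟩ ≥ 0, ⟨N,Λ⟩ ≥ 0, ⟨M,L⟩ ≥ 0 and ⟨N,L⟩ ≥ 0, then (α,β) = (0,0) or (α,β) = (1,0). In other words, L admits no nontrivial decomposition L = M + N into two classes satisfying all of these inequalities. -/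
/-!
Write `x = M·L` and `y = N·L`, so that `x + y = L² = 2s - 2`. For a class `v = (α, β)` the Gram
determinant of `L, v` gives `(v·L)² = L²·v² + Δ β²` with `Δ = m² - L²Λ² = s²(a-1)² + 4(a+s-1)`,
and `Δ > (s-1)²`. So if `β ≠ 0`, then `M² ≥ 0` and `M·L ≥ 0` force `x > s - 1`, and likewise
`y > s - 1`, contradicting `x + y = 2s - 2`. If `β = 0`, then `x = (2s-2)α` and
`y = (2s-2)(1-α)` are both nonnegative, so `α ∈ {0, 1}`.
-/

/-- The symmetric bilinear form on `ℤ²` with Gram matrix `[[2s-2, m], [m, 2g-2]]`,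
i.e. the intersection form on `Pic S = ℤL ⊕ ℤΛ` with `L² = 2s-2`, `Λ² = 2g-2`, `L·Λ = m`. -/
def picForm (s m g : ℤ) (v w : ℤ × ℤ) : ℤ :=
  (2 * s - 2) * v.1 * w.1 + m * (v.1 * w.2 + w.1 * v.2) + (2 * g - 2) * v.2 * w.2

section picForm

variable (s m g : ℤ)

theorem picForm_add_left (u v w : ℤ × ℤ) :
    picForm s m g (u + v) w = picForm s m g u w + picForm s m g v w := by
  simp only [picForm, Prod.fst_add, Prod.snd_add]
  ring

theorem picForm_one_zero_one_zero : picForm s m g (1, 0) (1, 0) = 2 * s - 2 := by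
  simp only [picForm]
  ring

theorem picForm_one_zero_right (α : ℤ) : picForm s m g (α, 0) (1, 0) = (2 * s - 2) * α := by
  simp only [picForm]
  ring

theorem sq_picForm_one_zero_right (v : ℤ × ℤ) :
    picForm s m g v (1, 0) ^ 2 =
      picForm s m g (1, 0) (1, 0) * picForm s m g v v +
        (m ^ 2 - (2 * s - 2) * (2 * g - 2)) * v.2 ^ 2 := by
  simp only [picForm]
  ring

variable {s m g}

theorem sub_one_lt_picForm_one_zero_right (hs : 1 ≤ s)
    (hdisc : (s - 1) ^ 2 < m ^ 2 - (2 * s - 2) * (2 * g - 2))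
    {v : ℤ × ℤ} (hv : v.2 ≠ 0) (hvv : 0 ≤ picForm s m g v v)
    (hvL : 0 ≤ picForm s m g v (1, 0)) :
    s - 1 < picForm s m g v (1, 0) := by
  have hβ : 0 < v.2 ^ 2 := by positivity
  refine lt_of_pow_lt_pow_left₀ 2 hvL ?_
  rw [sq_picForm_one_zero_right, picForm_one_zero_one_zero]
  nlinarith [mul_nonneg (by omega : (0 : ℤ) ≤ 2 * s - 2) hvv]

end picForm

theorem sub_one_sq_lt_discr {a s : ℤ} (ha : 2 ≤ a) (hs : 1 ≤ s) :
    (s - 1) ^ 2 < (s * (a + 1)) ^ 2 - (2 * s - 2) * (2 * ((s + 1) * a) - 2) := by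
  have hdisc : (s * (a + 1)) ^ 2 - (2 * s - 2) * (2 * ((s + 1) * a) - 2) =
      s ^ 2 * (a - 1) ^ 2 + 4 * (a + s - 1) := by ring
  rw [hdisc]
  nlinarith [mul_le_mul_of_nonneg_left (by nlinarith : (1 : ℤ) ≤ (a - 1) ^ 2) (sq_nonneg s)]

theorem no_nontrivial_decomposition_general
    (a s : ℤ) (ha : 2 ≤ a) (hs : 2 ≤ s)
    (g m : ℤ) (hg : g = (s + 1) * a) (hm : m = s * (a + 1))
    (α β : ℤ) (L M N : ℤ × ℤ)
    (hL : L = (1, 0)) (hM : M = (α, β)) (hN : N = (1 - α, -β))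
    (hMM : 0 ≤ picForm s m g M M) (hNN : 0 ≤ picForm s m g N N)
    (hML : 0 ≤ picForm s m g M L) (hNL : 0 ≤ picForm s m g N L) :
    (α = 0 ∧ β = 0) ∨ (α = 1 ∧ β = 0) := by
  subst hL
  have hsum : picForm s m g M (1, 0) + picForm s m g N (1, 0) = 2 * s - 2 := by
    have hMN : M + N = (1, 0) := by rw [hM, hN]; ext <;> simp
    rw [← picForm_add_left, hMN, picForm_one_zero_one_zero]
  by_cases hβ : β = 0
  · subst hM hN hβ
    rw [picForm_one_zero_right] at hML
    rw [neg_zero, picForm_one_zero_right] at hNL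
    have : 0 ≤ α := nonneg_of_mul_nonneg_right hML (by omega)
    have : 0 ≤ 1 - α := nonneg_of_mul_nonneg_right hNL (by omega)
    omega
  · have hdisc := sub_one_sq_lt_discr ha (by omega : 1 ≤ s)
    rw [← hg, ← hm] at hdisc
    have hx := sub_one_lt_picForm_one_zero_right (by omega) hdisc
      (by rw [hM]; exact hβ) hMM hML
    have hy := sub_one_lt_picForm_one_zero_right (by omega) hdisc
      (by rw [hN]; exact neg_ne_zero.mpr hβ) hNN hNL
    omega

theorem no_nontrivial_decomposition
    (a s : ℤ) (ha : 2 ≤ a) (hs : 2 ≤ s)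
    (g m : ℤ) (hg : g = (s + 1) * a) (hm : m = s * (a + 1))
    (α β : ℤ) (L Λ M N : ℤ × ℤ)
    (hL : L = (1, 0)) (hΛ : Λ = (0, 1)) (hM : M = (α, β)) (hN : N = (1 - α, -β))
    (hMM : 0 ≤ picForm s m g M M) (hNN : 0 ≤ picForm s m g N N)
    (hMΛ : 0 ≤ picForm s m g M Λ) (hNΛ : 0 ≤ picForm s m g N Λ)
    (hML : 0 ≤ picForm s m g M L) (hNL : 0 ≤ picForm s m g N L) :
    (α = 0 ∧ β = 0) ∨ (α = 1 ∧ β = 0) :=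
  no_nontrivial_decomposition_general a s ha hs g m hg hm α β L M N hL hM hN hMM hNN hML hNL
end

section
/- Let a ≥ 2 and d ≥ 1 be integers. For 0 ≤ i ≤ ⌊(a−1)/2⌋ define the nonnegative rational T_i(a,d) = [((2a−2)d + a − 1)! / ((2a−2)d + 2i)!] · [d(d−1)⋯(d−i+1)] · [(a−1)!/(a−1−2i)!] · (1/i!), where the falling factorial d(d−1)⋯(d−i+1) is interpreted as 0 when i > d. Then the alternating sum Q(a,d) = Σ_{i=0}^{⌊(a−1)/2⌋} (−1)^i T_i(a,d) is strictly positive. -/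
/-- The `i`-th term `T_i(a,d)` of the alternating sum `Q(a,d)`:
`T_i(a,d) = ((2a−2)d + a − 1)! / ((2a−2)d + 2i)! · d(d−1)⋯(d−i+1) · (a−1)!/(a−1−2i)! · 1/i!`,
where the falling factorial `d(d−1)⋯(d−i+1)` is `0` when `i > d`. -/
def secTerm (a d i : ℕ) : ℚ :=
  (((2 * a - 2) * d + a - 1).factorial : ℚ) / (((2 * a - 2) * d + 2 * i).factorial : ℚ)
    * (d.descFactorial i : ℚ)
    * (((a - 1).factorial : ℚ) / ((a - 1 - 2 * i).factorial : ℚ))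
    * (1 / (i.factorial : ℚ))

/-- The alternating sum `Q(a,d) = Σ_{i=0}^{⌊(a−1)/2⌋} (−1)^i T_i(a,d)`. -/
def secQ (a d : ℕ) : ℚ :=
  ∑ i ∈ Finset.range ((a - 1) / 2 + 1), (-1 : ℚ) ^ i * secTerm a d i

/-!
Writing `X = (2a−2)d`, consecutive terms satisfy
`(i+1)(X+2i+1)(X+2i+2) · T_{i+1} = (d−i)(a−1−2i)(a−2−2i) · T_i`,
and the left factor always exceeds the right one, which is at most `d(a−1)² < (X+1)(X+2)`.
So the `T_i` are nonnegative and nonincreasing, with `T_1 < T_0`,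
and the alternating sum is at least `T_0 − T_1 > 0`.
-/

open Finset

section AlternatingSum

variable {R : Type*} [CommRing R]

theorem sum_range_succ_neg_one_pow_mul (f : ℕ → R) (n : ℕ) :
    ∑ i ∈ range (n + 1), (-1) ^ i * f i = f 0 - ∑ i ∈ range n, (-1) ^ i * f (i + 1) := by
  simp only [sum_range_succ', pow_succ, mul_neg_one, neg_mul, sum_neg_distrib, pow_zero, one_mul]
  abel

variable [LinearOrder R] [IsStrictOrderedRing R]

theorem alternating_sum_mem_Icc (f : ℕ → R) (n : ℕ) (hanti : ∀ i < n, f (i + 1) ≤ f i)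
    (hnonneg : ∀ i ≤ n, 0 ≤ f i) :
    ∑ i ∈ range (n + 1), (-1) ^ i * f i ∈ Set.Icc 0 (f 0) := by
  induction n generalizing f with
  | zero => simpa using hnonneg 0 le_rfl
  | succ n ih =>
    obtain ⟨hlow, hhigh⟩ := ih (fun i ↦ f (i + 1)) (fun i hi ↦ hanti (i + 1) (by omega))
      (fun i hi ↦ hnonneg (i + 1) (by omega))
    have h10 : f 1 ≤ f 0 := hanti 0 (by omega)
    rw [sum_range_succ_neg_one_pow_mul]
    constructor <;> linarith

theorem sub_le_alternating_sum (f : ℕ → R) (n : ℕ) (hanti : ∀ i ≤ n, f (i + 1) ≤ f i)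
    (hnonneg : ∀ i ≤ n + 1, 0 ≤ f i) :
    f 0 - f 1 ≤ ∑ i ∈ range (n + 2), (-1) ^ i * f i := by
  have htail := (alternating_sum_mem_Icc (fun i ↦ f (i + 1)) n
    (fun i hi ↦ hanti (i + 1) (by omega)) (fun i hi ↦ hnonneg (i + 1) (by omega))).2
  rw [sum_range_succ_neg_one_pow_mul]
  linarith

end AlternatingSum

theorem secTerm_nonneg (a d i : ℕ) : 0 ≤ secTerm a d i := by
  unfold secTerm
  positivity

theorem secTerm_zero_pos (a d : ℕ) : 0 < secTerm a d 0 := by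
  unfold secTerm
  simp only [Nat.descFactorial_zero, Nat.cast_one]
  positivity

def secRatioNum (a d i : ℕ) : ℕ := (d - i) * ((a - 1 - 2 * i) * (a - 2 - 2 * i))

def secRatioDen (a d i : ℕ) : ℕ :=
  (i + 1) * (((2 * a - 2) * d + 2 * i + 1) * ((2 * a - 2) * d + 2 * i + 2))

theorem secRatioDen_pos (a d i : ℕ) : 0 < secRatioDen a d i := by
  unfold secRatioDen
  positivity

theorem secTerm_succ_mul_secRatioDen (a d i : ℕ) (hi : 2 * (i + 1) ≤ a - 1) :
    secTerm a d (i + 1) * secRatioDen a d i = secTerm a d i * secRatioNum a d i := by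
  obtain ⟨e, he⟩ : ∃ e, a - 1 - 2 * (i + 1) = e := ⟨_, rfl⟩
  unfold secTerm secRatioNum secRatioDen
  rw [show a - 1 - 2 * i = e + 2 by omega, show a - 2 - 2 * i = e + 1 by omega, he,
    show (2 * a - 2) * d + 2 * (i + 1) = (2 * a - 2) * d + 2 * i + 1 + 1 by ring,
    Nat.descFactorial_succ]
  simp only [Nat.factorial_succ]
  push_cast
  field_simp
  ring

theorem secRatioNum_lt_secRatioDen (a d i : ℕ) : secRatioNum a d i < secRatioDen a d i := by
  unfold secRatioNum secRatioDen
  rw [show 2 * a - 2 = 2 * (a - 1) by omega]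
  set c := a - 1
  calc (d - i) * ((a - 1 - 2 * i) * (a - 2 - 2 * i))
      ≤ d * (c * c) := by gcongr <;> omega
    _ < (2 * c * d + 1) * (2 * c * d + 2) := by nlinarith [Nat.le_mul_self d]
    _ ≤ (2 * c * d + 2 * i + 1) * (2 * c * d + 2 * i + 2) := by gcongr <;> omega
    _ ≤ (i + 1) * ((2 * c * d + 2 * i + 1) * (2 * c * d + 2 * i + 2)) :=
      Nat.le_mul_of_pos_left _ i.succ_pos

theorem secTerm_succ_le (a d i : ℕ) (hi : 2 * (i + 1) ≤ a - 1) :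
    secTerm a d (i + 1) ≤ secTerm a d i := by
  refine le_of_mul_le_mul_right ?_ (Nat.cast_pos.mpr (secRatioDen_pos a d i) : (0 : ℚ) < _)
  rw [secTerm_succ_mul_secRatioDen a d i hi]
  exact mul_le_mul_of_nonneg_left (by exact_mod_cast (secRatioNum_lt_secRatioDen a d i).le)
    (secTerm_nonneg a d i)

theorem secTerm_one_lt_zero (a d : ℕ) (ha : 3 ≤ a) : secTerm a d 1 < secTerm a d 0 := by
  refine lt_of_mul_lt_mul_right ?_ (Nat.cast_nonneg (α := ℚ) (secRatioDen a d 0))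
  rw [secTerm_succ_mul_secRatioDen a d 0 (by omega)]
  exact mul_lt_mul_of_pos_left (by exact_mod_cast secRatioNum_lt_secRatioDen a d 0)
    (secTerm_zero_pos a d)

theorem secQ_pos_general (a d : ℕ) : 0 < secQ a d := by
  unfold secQ
  rcases hm : (a - 1) / 2 with _ | k
  · simpa using secTerm_zero_pos a d
  · have hQ := sub_le_alternating_sum (secTerm a d) k
      (fun i hi ↦ secTerm_succ_le a d i (by omega)) (fun i _ ↦ secTerm_nonneg a d i)
    linarith [secTerm_one_lt_zero a d (by omega)]

theorem secQ_pos (a d : ℕ) (ha : 2 ≤ a) (hd : 1 ≤ d) : 0 < secQ a d :=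
  secQ_pos_general a d
end

section
/- Let a ≥ 2 and d ≥ 1 be integers, and for 0 ≤ i ≤ ⌊(a−1)/2⌋ define T_i(a,d) = [((2a−2)d + a − 1)! / ((2a−2)d + 2i)!] · [d(d−1)⋯(d−i+1)] · [(a−1)!/(a−1−2i)!] · (1/i!), with the falling factorial d(d−1)⋯(d−i+1) interpreted as 0 when i > d. Then for every i with i + 1 ≤ min(⌊(a−1)/2⌋, d), one has T_{i+1}(a,d) < T_i(a,d); that is, consecutive summands of the alternating sum Q(a,d) = Σ_i (−1)^i T_i(a,d) strictly decrease in absolute value. -/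
def secRatio (a d i : ℕ) : ℚ :=
  ((d - i) * ((a - 1 - 2 * i) * (a - 2 - 2 * i)) : ℕ) /
    ((((2 * a - 2) * d + 2 * i + 1) * ((2 * a - 2) * d + 2 * i + 2)) * (i + 1) : ℕ)

theorem secTerm_pos {a d i : ℕ} (h : i ≤ d) : 0 < secTerm a d i := by
  have : 0 < d.descFactorial i := Nat.descFactorial_pos.mpr h
  unfold secTerm
  positivity

theorem secTerm_succ {a d i : ℕ} (h : 2 * (i + 1) ≤ a - 1) :
    secTerm a d (i + 1) = secTerm a d i * secRatio a d i := by
  obtain ⟨m, hm⟩ : ∃ m, a - 1 - 2 * i = m + 2 := ⟨a - 1 - 2 * (i + 1), by omega⟩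
  have hm' : a - 1 - 2 * (i + 1) = m := by omega
  have hm'' : a - 2 - 2 * i = m + 1 := by omega
  have hN : (2 * a - 2) * d + 2 * (i + 1) = (2 * a - 2) * d + 2 * i + 1 + 1 := by omega
  simp only [secTerm, secRatio, hm, hm', hm'', hN, Nat.factorial_succ, Nat.descFactorial_succ]
  push_cast
  field_simp
  ring

theorem secRatio_lt_one (a d i : ℕ) : secRatio a d i < 1 := by
  unfold secRatio
  rw [div_lt_one (by positivity), Nat.cast_lt]
  set N := (2 * a - 2) * d
  have hN : d * (a - 1) ≤ N := by
    simp only [N, show 2 * a - 2 = 2 * (a - 1) by omega]; nlinarith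
  calc (d - i) * ((a - 1 - 2 * i) * (a - 2 - 2 * i))
      ≤ d * ((a - 1) * (a - 1)) :=
        Nat.mul_le_mul (Nat.sub_le d i) (Nat.mul_le_mul (by omega) (by omega))
    _ ≤ (d * d) * ((a - 1) * (a - 1)) := by gcongr; exact Nat.le_mul_self d
    _ = (d * (a - 1)) * (d * (a - 1)) := by ring
    _ ≤ N * N := by gcongr
    _ < (N + 2 * i + 1) * (N + 2 * i + 2) := by nlinarith
    _ ≤ (N + 2 * i + 1) * (N + 2 * i + 2) * (i + 1) := Nat.le_mul_of_pos_right _ (by omega)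

theorem secTerm_strict_anti_general (a d : ℕ)
    (i : ℕ) (hi : i + 1 ≤ min ((a - 1) / 2) d) :
    secTerm a d (i + 1) < secTerm a d i := by
  rw [le_min_iff] at hi
  rw [secTerm_succ (by omega)]
  exact mul_lt_of_lt_one_right (secTerm_pos (by omega)) (secRatio_lt_one a d i)

theorem secTerm_strict_anti (a d : ℕ) (ha : 2 ≤ a) (hd : 1 ≤ d)
    (i : ℕ) (hi : i + 1 ≤ min ((a - 1) / 2) d) :
    secTerm a d (i + 1) < secTerm a d i :=
  secTerm_strict_anti_general a d i hi
end

section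
/- Let a ≥ 2 and d ≥ 1 be integers. Then the following identity of rational numbers holds: [(2ad)!·(2ad−2d+a−1)! / ((2ad−2d)!·d!·(2ad−d+a−1)!)] · Σ_{k=0}^{d} [((1−a)/2)_k · ((2−a)/2)_k · (−d)_k] / [(ad−d+1/2)_k · (ad−d+1)_k · k!] = [(2ad)! / ((2ad−d+a−1)!·d!)] · Σ_{i=0}^{⌊(a−1)/2⌋} (−1)^i · [((2a−2)d + a − 1)! / ((2a−2)d + 2i)!] · [d(d−1)⋯(d−i+1)] · [(a−1)!/(a−1−2i)!] · (1/i!), where (x)_k = x(x+1)⋯(x+k−1) denotes the rising factorial and the falling factorial d(d−1)⋯(d−i+1) is 0 when i > d. -/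
open Finset Polynomial

theorem ascPochhammer_eval_half_mul_eval_add_one_half {K : Type*} [Field K] [NeZero (2 : K)]
    (x : K) (k : ℕ) :
    (ascPochhammer K k).eval (x / 2) * (ascPochhammer K k).eval ((x + 1) / 2)
      = (ascPochhammer K (2 * k)).eval x / 4 ^ k := by
  have h4 : (4 : K) ≠ 0 := by
    rw [show (4 : K) = 2 * 2 by norm_num]; exact mul_ne_zero two_ne_zero two_ne_zero
  induction k with
  | zero => simp
  | succ k ih =>
    rw [show 2 * (k + 1) = 2 * k + 1 + 1 by ring, ascPochhammer_succ_eval,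
      ascPochhammer_succ_eval, ascPochhammer_succ_eval, ascPochhammer_succ_eval,
      mul_mul_mul_comm, ih, pow_succ]
    push_cast
    field_simp
    ring

theorem Nat.cast_descFactorial_eq_div {K : Type*} [DivisionRing K] [CharZero K] {n k : ℕ}
    (h : k ≤ n) : (n.descFactorial k : K) = n.factorial / (n - k).factorial := by
  rw [eq_div_iff (Nat.cast_ne_zero.mpr (Nat.factorial_ne_zero _)), ← Nat.cast_mul, mul_comm,
    Nat.factorial_mul_descFactorial h]

noncomputable def hypergeomTerm (a d k : ℕ) : ℚ :=
  ((ascPochhammer ℚ k).eval ((1 - (a : ℚ)) / 2)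
      * (ascPochhammer ℚ k).eval ((2 - (a : ℚ)) / 2)
      * (ascPochhammer ℚ k).eval (-(d : ℚ)))
    / ((ascPochhammer ℚ k).eval ((a : ℚ) * d - d + 1 / 2)
      * (ascPochhammer ℚ k).eval ((a : ℚ) * d - d + 1)
      * (k.factorial : ℚ))

theorem hypergeomTerm_eq {a : ℕ} (d k : ℕ) (ha : 1 ≤ a) :
    hypergeomTerm a d k
      = (-1) ^ k * ((2 * a - 2) * d).factorial * d.descFactorial k * (a - 1).descFactorial (2 * k)
        / (((2 * a - 2) * d + 2 * k).factorial * k.factorial) := by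
  set N := (2 * a - 2) * d
  have hN : (N : ℚ) = 2 * a * d - 2 * d := by
    simp only [N, Nat.cast_mul, Nat.cast_sub (by omega : 2 ≤ 2 * a)]; push_cast; ring
  have hx : (1 - (a : ℚ)) = -((a - 1 : ℕ) : ℚ) := by push_cast [ha]; ring
  rw [hypergeomTerm,
    show (2 - (a : ℚ)) / 2 = ((1 - a) + 1) / 2 by ring,
    show (a : ℚ) * d - d + 1 / 2 = ((N : ℚ) + 1) / 2 by rw [hN]; ring,
    show (a : ℚ) * d - d + 1 = ((N : ℚ) + 1 + 1) / 2 by rw [hN]; ring,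
    ascPochhammer_eval_half_mul_eval_add_one_half, ascPochhammer_eval_half_mul_eval_add_one_half,
    hx, ascPochhammer_eval_neg_eq_descPochhammer, ascPochhammer_eval_neg_eq_descPochhammer,
    descPochhammer_eval_eq_descFactorial, descPochhammer_eval_eq_descFactorial]
  have hasc : (ascPochhammer ℚ (2 * k)).eval ((N : ℚ) + 1)
      = (N + 2 * k).factorial / N.factorial := by
    rw [eq_div_iff (by positivity), mul_comm, factorial_mul_ascPochhammer]
  rw [hasc, pow_mul, neg_one_sq, one_pow]
  field_simp

/-- `secTerm` with `(a−1)!/(a−1−2i)!` written as a falling factorial; unlike `secTerm`, whose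
`a − 1 − 2i` truncates, it vanishes for `2i > a − 1`. -/
def secTermDesc (a d i : ℕ) : ℚ :=
  ((2 * a - 2) * d + a - 1).factorial / ((2 * a - 2) * d + 2 * i).factorial
    * d.descFactorial i * (a - 1).descFactorial (2 * i) / i.factorial

theorem secTerm_eq_secTermDesc {a i : ℕ} (d : ℕ) (h : 2 * i ≤ a - 1) :
    secTerm a d i = secTermDesc a d i := by
  rw [secTerm, secTermDesc, Nat.cast_descFactorial_eq_div h]
  ring

theorem secQ_eq_sum_range (a d : ℕ) :
    secQ a d = ∑ i ∈ range (d + 1), (-1) ^ i * secTermDesc a d i := by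
  have hvanish : ∀ i ≥ min (d + 1) ((a - 1) / 2 + 1), (-1 : ℚ) ^ i * secTermDesc a d i = 0 := by
    intro i hi
    rcases min_le_iff.mp hi with hd | ha
    · simp [secTermDesc, Nat.descFactorial_eq_zero_iff_lt.mpr (by omega : d < i)]
    · simp [secTermDesc, Nat.descFactorial_eq_zero_iff_lt.mpr (by omega : a - 1 < 2 * i)]
  calc secQ a d = ∑ i ∈ range ((a - 1) / 2 + 1), (-1) ^ i * secTermDesc a d i :=
        sum_congr rfl fun i hi => by
          rw [secTerm_eq_secTermDesc d (by rw [mem_range] at hi; omega)]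
    _ = ∑ i ∈ range (min (d + 1) ((a - 1) / 2 + 1)), (-1) ^ i * secTermDesc a d i :=
        eventually_constant_sum hvanish (min_le_right _ _)
    _ = ∑ i ∈ range (d + 1), (-1) ^ i * secTermDesc a d i :=
        (eventually_constant_sum hvanish (min_le_left _ _)).symm

theorem hypergeometric_eq_Q_general (a d : ℕ) (ha : 2 ≤ a) :
    ((2 * a * d).factorial : ℚ) * ((2 * a * d - 2 * d + a - 1).factorial : ℚ)
        / (((2 * a * d - 2 * d).factorial : ℚ) * (d.factorial : ℚ)
            * ((2 * a * d - d + a - 1).factorial : ℚ))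
      * ∑ k ∈ Finset.range (d + 1),
          ((ascPochhammer ℚ k).eval ((1 - (a : ℚ)) / 2)
              * (ascPochhammer ℚ k).eval ((2 - (a : ℚ)) / 2)
              * (ascPochhammer ℚ k).eval (-(d : ℚ)))
            / ((ascPochhammer ℚ k).eval ((a : ℚ) * d - d + 1 / 2)
                * (ascPochhammer ℚ k).eval ((a : ℚ) * d - d + 1)
                * (k.factorial : ℚ))
    = ((2 * a * d).factorial : ℚ)
        / (((2 * a * d - d + a - 1).factorial : ℚ) * (d.factorial : ℚ)) * secQ a d := by
  rw [secQ_eq_sum_range, mul_sum, mul_sum, ← Nat.sub_mul]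
  refine sum_congr rfl fun k _ => ?_
  rw [← hypergeomTerm, hypergeomTerm_eq d k (by omega), secTermDesc]
  field_simp

/-- The hypergeometric expression for `−P_c(a,d)` equals `(2ad)!/((2ad−d+a−1)!·d!) · Q(a,d)`. -/
theorem hypergeometric_eq_Q (a d : ℕ) (ha : 2 ≤ a) (hd : 1 ≤ d) :
    ((2 * a * d).factorial : ℚ) * ((2 * a * d - 2 * d + a - 1).factorial : ℚ)
        / (((2 * a * d - 2 * d).factorial : ℚ) * (d.factorial : ℚ)
            * ((2 * a * d - d + a - 1).factorial : ℚ))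
      * ∑ k ∈ Finset.range (d + 1),
          ((ascPochhammer ℚ k).eval ((1 - (a : ℚ)) / 2)
              * (ascPochhammer ℚ k).eval ((2 - (a : ℚ)) / 2)
              * (ascPochhammer ℚ k).eval (-(d : ℚ)))
            / ((ascPochhammer ℚ k).eval ((a : ℚ) * d - d + 1 / 2)
                * (ascPochhammer ℚ k).eval ((a : ℚ) * d - d + 1)
                * (k.factorial : ℚ))
    = ((2 * a * d).factorial : ℚ)
        / (((2 * a * d - d + a - 1).factorial : ℚ) * (d.factorial : ℚ)) * secQ a d :=
  hypergeometric_eq_Q_general a d ha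
end

section
/- Let d, g, m be natural numbers with g ≥ 2d+1 and m ≤ 2g−2. The function z ↦ Z_{g,m}(z)·(1/2 − 1/(2√(1+4z))), where Z_{g,m}(z) = (2/(√(1+4z)+1))^{2g−2−m}·(1+4z)^{(g−1)/2} for real z ∈ (−1/4,1/4), is real-analytic at 0, and its d-th Taylor coefficient at 0 equals [g!·(2g−2−m)! / (2·(g−2d)!·d!·(2g−2−m+d)!)] · Σ_{k=0}^{d} [(−g/2+m/2+1−d)_k · (−g/2+(m+3)/2−d)_k · (−d)_k]/[((g+1)/2−d)_k · (g/2+1−d)_k · k!] − [(g−1)!·(2g−2−m)! / (2·(g−2d−1)!·d!·(2g−2−m+d)!)] · Σ_{k=0}^{d} [(−g/2+m/2+1−d)_k · (−g/2+(m+1)/2−d)_k · (−d)_k]/[((g+1)/2−d)_k · (g/2−d)_k · k!], where (x)_k = x(x+1)⋯(x+k−1) denotes the rising factorial. -/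
/-- The generating function `Z_{g,m}(z) = (2/(√(1+4z)+1))^{2g−2−m} · (1+4z)^{(g−1)/2}`. -/
noncomputable def Zgen (g m : ℝ) (z : ℝ) : ℝ :=
  (2 / (Real.sqrt (1 + 4 * z) + 1)) ^ (2 * g - 2 - m) * (1 + 4 * z) ^ ((g - 1) / 2)

/-!
Write `u = √(1 + 4z)` and `v = 2 / (1 + u)`, so that near `0` the function is
`(v ^ a u ^ (g - 1) - v ^ a u ^ (g - 2)) / 2` with `a = 2g - 2 - m`. The differential identity
`(v ^ a u ^ (b + 1))' = (b - a) v ^ (a + 1) u ^ (b + 1) - 2z (v ^ (a + 1) u ^ (b + 1))'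
  + (b + 2) v ^ (a + 1) u ^ b`
makes the derivatives `c(a, b, d)` of `v ^ a u ^ b` at `0` satisfy
`c(a, b + 1, d + 1) = (b - a - 2d) c(a + 1, b + 1, d) + (b + 2) c(a + 1, b, d)`,
which is solved by
`c(a, b, d) = a! / (a + d)! · ∑ₖ (-1)ᵏ C(d, k) (b + 1 - a - 2d)_(2k) (b + 1)^(2(d - k))`
with rising and falling factorials; checking this reduces, through Pascal's rule, to a two-term
Pochhammer identity. The duplication formula `(2x)_(2k) = 4ᵏ (x)ₖ (x + 1/2)ₖ` and
`(-d)ₖ = (-1)ᵏ C(d, k) k!` then turn the two alternating sums into the terminating `₃F₂` sums.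
-/

open Polynomial Finset Filter
open scoped ContDiff Topology

section Pochhammer

variable {R : Type*} [CommRing R]

theorem descPochhammer_eval_add (n m : ℕ) (x : R) :
    (descPochhammer R (n + m)).eval x
      = (descPochhammer R n).eval x * (ascPochhammer R m).eval (x - n - m + 1) := by
  rw [← descPochhammer_mul, eval_mul, eval_comp, eval_sub, eval_X, eval_natCast,
    descPochhammer_eval_eq_ascPochhammer (R := R) (x - n)]

theorem ascPochhammer_eval_neg_natCast (d k : ℕ) :
    (ascPochhammer R k).eval (-(d : R)) = (-1) ^ k * (d.choose k * k.factorial : ℕ) := by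
  rw [ascPochhammer_eval_neg_eq_descPochhammer, descPochhammer_eval_eq_descFactorial,
    Nat.descFactorial_eq_factorial_mul_choose, mul_comm k.factorial]

theorem natCast_factorial_eq_mul_descPochhammer {n k : ℕ} (h : k ≤ n) :
    (n.factorial : R) = (n - k).factorial * (descPochhammer R k).eval (n : R) := by
  rw [descPochhammer_eval_eq_descFactorial, ← Nat.cast_mul, Nat.factorial_mul_descFactorial h]

theorem descPochhammer_ascPochhammer_add_two (i j : ℕ) (x y : R) :
    (descPochhammer R (i + 2)).eval x * (ascPochhammer R j).eval y
        - (descPochhammer R i).eval x * (ascPochhammer R (j + 2)).eval y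
      = (x - y - i - j - 1) * (y * (ascPochhammer R j).eval (y + 1) * (descPochhammer R i).eval x
          + x * (ascPochhammer R j).eval y * (descPochhammer R i).eval (x - 1)) := by
  have hy : y * (ascPochhammer R j).eval (y + 1) = (ascPochhammer R j).eval y * (y + j) := by
    rw [← ascPochhammer_succ_eval]; simp [ascPochhammer_succ_left]
  have hx : x * (descPochhammer R i).eval (x - 1) = (descPochhammer R i).eval x * (x - i) := by
    rw [← descPochhammer_succ_eval]; simp [descPochhammer_succ_left]
  simp only [descPochhammer_succ_eval, ascPochhammer_succ_eval]
  push_cast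
  linear_combination (-(x - y - i - j - 1) * (descPochhammer R i).eval x) * hy
    - (x - y - i - j - 1) * (ascPochhammer R j).eval y * hx

end Pochhammer

theorem ascPochhammer_eval_two_mul {K : Type*} [Field K] [CharZero K] (k : ℕ) (x : K) :
    (ascPochhammer K (2 * k)).eval (2 * x)
      = 4 ^ k * (ascPochhammer K k).eval x * (ascPochhammer K k).eval (x + 1 / 2) := by
  induction k with
  | zero => simp
  | succ k ih =>
    rw [show 2 * (k + 1) = 2 * k + 1 + 1 by ring]
    simp only [ascPochhammer_succ_eval, ih]
    push_cast
    ring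

theorem Finset.sum_range_succ_neg_one_pow_choose_mul {R : Type*} [CommRing R] (d : ℕ)
    (F : ℕ → R) :
    ∑ k ∈ range (d + 2), (-1) ^ k * ((d + 1).choose k : R) * F k
      = ∑ k ∈ range (d + 1), (-1) ^ k * (d.choose k : R) * (F k - F (k + 1)) := by
  have hshift : ∑ k ∈ range (d + 1), (-1) ^ k * (d.choose k : R) * F k
      = ∑ k ∈ range (d + 1), (-1) ^ (k + 1) * (d.choose (k + 1) : R) * F (k + 1) + F 0 := by
    calc _ = ∑ k ∈ range (d + 2), (-1) ^ k * (d.choose k : R) * F k := by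
          simp [sum_range_succ _ (d + 1)]
      _ = _ := by simp [sum_range_succ']
  simp only [mul_sub, sum_sub_distrib, hshift, sum_range_succ' _ (d + 1), Nat.choose_succ_succ',
    Nat.cast_add, mul_add, add_mul, sum_add_distrib, pow_succ]
  simp only [mul_neg, mul_one, neg_mul, sum_neg_distrib, pow_zero, Nat.choose_zero_right,
    Nat.cast_one, one_mul]
  ring

theorem iteratedDeriv_id_mul_deriv_zero {𝕜 : Type*} [NontriviallyNormedField 𝕜]
    [CompleteSpace 𝕜] {f : 𝕜 → 𝕜} (hf : AnalyticAt 𝕜 f 0) (n : ℕ) :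
    iteratedDeriv n (fun z => z * deriv f z) 0 = n * iteratedDeriv n f 0 := by
  rw [iteratedDeriv_fun_mul (n := n) (f := fun z => z) contDiffAt_fun_id
    (hf.deriv.contDiffAt.of_le le_top)]
  simp only [iteratedDeriv_fun_id_zero, mul_ite, mul_one, mul_zero, ite_mul, zero_mul]
  rcases n with _ | n
  · simp
  · rw [sum_ite_eq' (range _) 1, if_pos (by simp), Nat.choose_one_right, Nat.add_sub_cancel,
      ← iteratedDeriv_succ']

namespace SecantPlane

noncomputable def altPochSum (d : ℕ) (y x : ℝ) : ℝ :=
  ∑ k ∈ range (d + 1), (-1) ^ k * (d.choose k : ℝ)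
    * ((ascPochhammer ℝ (2 * k)).eval y * (descPochhammer ℝ (2 * (d - k))).eval x)

@[simp]
theorem altPochSum_zero (y x : ℝ) : altPochSum 0 y x = 1 := by
  simp [altPochSum]

theorem altPochSum_succ (d : ℕ) (y x : ℝ) :
    altPochSum (d + 1) y x
      = (x - y - 2 * d - 1) * (y * altPochSum d (y + 1) x + x * altPochSum d y (x - 1)) := by
  rw [altPochSum, sum_range_succ_neg_one_pow_choose_mul, altPochSum, altPochSum, mul_sum, mul_sum,
    ← sum_add_distrib, mul_sum]
  refine sum_congr rfl fun k hk => ?_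
  have hkd : k ≤ d := Nat.lt_succ_iff.mp (mem_range.mp hk)
  have hstep := descPochhammer_ascPochhammer_add_two (2 * (d - k)) (2 * k) x y
  rw [show 2 * (d + 1 - k) = 2 * (d - k) + 2 by omega, show 2 * (k + 1) = 2 * k + 2 by ring,
    show 2 * (d + 1 - (k + 1)) = 2 * (d - k) by omega]
  push_cast [Nat.cast_sub hkd] at hstep ⊢
  linear_combination (-1) ^ k * (d.choose k : ℝ) * hstep

/-- The hypergeometric series `₃F₂(a₁, a₂, a₃; b₁, b₂; 1)` cut off after the term `k = d`;
for `a₃ = -d` this is the whole (terminating) series. -/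
noncomputable def hypergeom32 (d : ℕ) (a₁ a₂ a₃ b₁ b₂ : ℝ) : ℝ :=
  ∑ k ∈ range (d + 1), (ascPochhammer ℝ k).eval a₁ * (ascPochhammer ℝ k).eval a₂
    * (ascPochhammer ℝ k).eval a₃
    / ((ascPochhammer ℝ k).eval b₁ * (ascPochhammer ℝ k).eval b₂ * k.factorial)

theorem hypergeom32_swap (d : ℕ) (a₁ a₂ a₃ b₁ b₂ : ℝ) :
    hypergeom32 d a₁ a₂ a₃ b₁ b₂ = hypergeom32 d a₂ a₁ a₃ b₂ b₁ := by
  simp only [hypergeom32, mul_comm ((ascPochhammer ℝ _).eval a₁),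
    mul_comm ((ascPochhammer ℝ _).eval b₁)]

theorem hypergeom32_eq_altPochSum_div (d : ℕ) {α α' β β' y x : ℝ} (hα : α' = α + 1 / 2)
    (hβ : β' = β + 1 / 2) (hy : y = 2 * α) (hx : x = 2 * β + 2 * d - 1) (hβpos : 0 < β) :
    hypergeom32 d α α' (-d) β β' = altPochSum d y x / (descPochhammer ℝ (2 * d)).eval x := by
  subst hα hβ hy
  have hD : 0 < (descPochhammer ℝ (2 * d)).eval x := by
    rw [descPochhammer_eval_eq_ascPochhammer]
    exact ascPochhammer_pos _ _ (by rw [hx]; push_cast; linarith)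
  rw [eq_div_iff hD.ne', mul_comm, hypergeom32, mul_sum]
  refine sum_congr rfl fun k hk => ?_
  have hkd : k ≤ d := Nat.lt_succ_iff.mp (mem_range.mp hk)
  have hsplit : (descPochhammer ℝ (2 * d)).eval x
      = (descPochhammer ℝ (2 * (d - k))).eval x * (ascPochhammer ℝ (2 * k)).eval (2 * β) := by
    rw [show 2 * d = 2 * (d - k) + 2 * k by omega, descPochhammer_eval_add, hx]
    push_cast [Nat.cast_sub hkd]
    ring_nf
  have h₁ : (ascPochhammer ℝ k).eval β ≠ 0 := (ascPochhammer_pos k β hβpos).ne'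
  have h₂ : (ascPochhammer ℝ k).eval (β + 1 / 2) ≠ 0 :=
    (ascPochhammer_pos k _ (by positivity)).ne'
  rw [hsplit, ascPochhammer_eval_two_mul, ascPochhammer_eval_two_mul,
    ascPochhammer_eval_neg_natCast]
  push_cast
  generalize (ascPochhammer ℝ k).eval (β + 1 / 2) = B at h₂ ⊢
  field_simp

theorem eventually_one_add_four_mul_pos : ∀ᶠ z in 𝓝 (0 : ℝ), 0 < 1 + 4 * z :=
  eventually_of_mem (Ioi_mem_nhds (by norm_num : (-1 / 4 : ℝ) < 0)) fun z (hz : -1 / 4 < z) => by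
    linarith

theorem contDiffAt_sqrt_one_add_four_mul {z : ℝ} (hz : 0 < 1 + 4 * z) :
    ContDiffAt ℝ ω (fun z : ℝ => √(1 + 4 * z)) z :=
  (by fun_prop : ContDiffAt ℝ ω (fun z : ℝ => 1 + 4 * z) z).sqrt hz.ne'

noncomputable def zMonomial (a b : ℕ) (z : ℝ) : ℝ :=
  (2 / (√(1 + 4 * z) + 1)) ^ a * √(1 + 4 * z) ^ b

theorem analyticAt_zMonomial (a b : ℕ) {z : ℝ} (hz : 0 < 1 + 4 * z) :
    AnalyticAt ℝ (zMonomial a b) z := by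
  have hsqrt := contDiffAt_sqrt_one_add_four_mul hz
  exact (((contDiffAt_const.div (hsqrt.add contDiffAt_const) (by positivity)).pow a).mul
    (hsqrt.pow b)).analyticAt

theorem hasDerivAt_zMonomial (a b : ℕ) {z : ℝ} (hz : 0 < 1 + 4 * z) :
    HasDerivAt (zMonomial a b)
      ((2 / (√(1 + 4 * z) + 1)) ^ (a + 1) * √(1 + 4 * z) ^ b
        * ((b - a) * √(1 + 4 * z) + b) / √(1 + 4 * z) ^ 2) z := by
  have hu : 0 < √(1 + 4 * z) := Real.sqrt_pos.2 hz
  have hu1 : 1 + √(1 + 4 * z) ≠ 0 := by positivity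
  have hlin : HasDerivAt (fun z : ℝ => 1 + 4 * z) 4 z := by
    simpa using ((hasDerivAt_id z).const_mul (4 : ℝ)).const_add 1
  have hsqrt : HasDerivAt (fun z : ℝ => √(1 + 4 * z)) (2 / √(1 + 4 * z)) z :=
    (hlin.sqrt hz.ne').congr_deriv (by field_simp; ring)
  refine ((((hasDerivAt_const z (2 : ℝ)).fun_div (hsqrt.add_const 1) (by positivity)).fun_pow a)
    |>.fun_mul (hsqrt.fun_pow b)).congr_deriv ?_
  set u := √(1 + 4 * z)
  rcases a with _ | a <;> rcases b with _ | b <;>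
    simp only [Nat.cast_zero, zero_mul, zero_add, Nat.add_sub_cancel] <;> push_cast <;>
    simp only [div_pow] <;> field_simp <;> ring

theorem deriv_zMonomial_succ (a b : ℕ) {z : ℝ} (hz : 0 < 1 + 4 * z) :
    deriv (zMonomial a (b + 1)) z
      = (b - a) * zMonomial (a + 1) (b + 1) z - 2 * z * deriv (zMonomial (a + 1) (b + 1)) z
        + (b + 2) * zMonomial (a + 1) b z := by
  have hu : 0 < √(1 + 4 * z) := Real.sqrt_pos.2 hz
  have hu1 : 1 + √(1 + 4 * z) ≠ 0 := by positivity
  have hz' : z = (√(1 + 4 * z) ^ 2 - 1) / 4 := by rw [Real.sq_sqrt hz.le]; ring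
  rw [(hasDerivAt_zMonomial _ _ hz).deriv, (hasDerivAt_zMonomial _ _ hz).deriv, zMonomial,
    zMonomial]
  set u := √(1 + 4 * z)
  rw [hz']
  push_cast
  simp only [div_pow]
  field_simp
  ring

theorem iteratedDeriv_zMonomial_succ (a b d : ℕ) :
    iteratedDeriv (d + 1) (zMonomial a (b + 1)) 0
      = (b - a - 2 * d) * iteratedDeriv d (zMonomial (a + 1) (b + 1)) 0
        + (b + 2) * iteratedDeriv d (zMonomial (a + 1) b) 0 := by
  have hode : deriv (zMonomial a (b + 1)) =ᶠ[𝓝 0] fun z =>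
      (b - a) * zMonomial (a + 1) (b + 1) z - 2 * (z * deriv (zMonomial (a + 1) (b + 1)) z)
        + (b + 2) * zMonomial (a + 1) b z :=
    eventually_one_add_four_mul_pos.mono fun z hz => by rw [deriv_zMonomial_succ a b hz, mul_assoc]
  have h₀ : (0 : ℝ) < 1 + 4 * 0 := by norm_num
  have h₁ := analyticAt_zMonomial (a + 1) (b + 1) h₀
  have c₁ : ContDiffAt ℝ d (zMonomial (a + 1) (b + 1)) 0 := h₁.contDiffAt
  have c₂ : ContDiffAt ℝ d (zMonomial (a + 1) b) 0 := (analyticAt_zMonomial _ _ h₀).contDiffAt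
  have c₃ : ContDiffAt ℝ d (deriv (zMonomial (a + 1) (b + 1))) 0 := h₁.deriv.contDiffAt
  rw [iteratedDeriv_succ', hode.iteratedDeriv_eq, iteratedDeriv_fun_add (by fun_prop) (by fun_prop),
    iteratedDeriv_fun_sub (by fun_prop) (by fun_prop)]
  simp only [iteratedDeriv_const_mul_field, iteratedDeriv_id_mul_deriv_zero h₁]
  ring

theorem iteratedDeriv_zMonomial_zero (a b d : ℕ) (hdb : d ≤ b) :
    iteratedDeriv d (zMonomial a b) 0
      = a.factorial / (a + d).factorial * altPochSum d (b + 1 - a - 2 * d) (b + 1) := by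
  induction d generalizing a b with
  | zero => norm_num [zMonomial, Nat.factorial_ne_zero]
  | succ d ih =>
    obtain ⟨b, rfl⟩ : ∃ b', b = b' + 1 := ⟨b - 1, by omega⟩
    rw [iteratedDeriv_zMonomial_succ, ih _ _ (by omega), ih _ _ (by omega), altPochSum_succ,
      show a + (d + 1) = a + 1 + d by ring, Nat.factorial_succ a]
    push_cast
    ring_nf

theorem analyticAt_Zgen_mul (g m : ℝ) {z : ℝ} (hz : 0 < 1 + 4 * z) :
    AnalyticAt ℝ (fun z => Zgen g m z * (1 / 2 - 1 / (2 * √(1 + 4 * z)))) z := by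
  have hsqrt := contDiffAt_sqrt_one_add_four_mul hz
  have hbase : ContDiffAt ℝ ω (fun z : ℝ => 2 / (√(1 + 4 * z) + 1)) z :=
    contDiffAt_const.div (hsqrt.add contDiffAt_const) (by positivity)
  refine ContDiffAt.analyticAt (ContDiffAt.mul ?_ ?_)
  · exact (hbase.rpow_const_of_ne (by positivity)).mul
      ((by fun_prop : ContDiffAt ℝ ω (fun z : ℝ => 1 + 4 * z) z).rpow_const_of_ne hz.ne')
  · exact contDiffAt_const.sub (contDiffAt_const.div (contDiffAt_const.mul hsqrt) (by positivity))

theorem Zgen_mul_eq (g m : ℕ) (hg : 2 ≤ g) (hm : m + 2 ≤ 2 * g) {z : ℝ} (hz : 0 < 1 + 4 * z) :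
    Zgen g m z * (1 / 2 - 1 / (2 * √(1 + 4 * z)))
      = (zMonomial (2 * g - 2 - m) (g - 1) z - zMonomial (2 * g - 2 - m) (g - 2) z) / 2 := by
  have ha : (2 * g - 2 - m : ℝ) = ((2 * g - 2 - m : ℕ) : ℝ) := by
    rw [Nat.cast_sub (by omega), Nat.cast_sub (by omega)]; push_cast; ring
  have hb : ((g : ℝ) - 1) / 2 = 1 / 2 * ((g - 1 : ℕ) : ℝ) := by
    rw [Nat.cast_sub (by omega)]; push_cast; ring
  rw [Zgen, ha, Real.rpow_natCast, hb, Real.rpow_mul hz.le, ← Real.sqrt_eq_rpow,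
    Real.rpow_natCast, zMonomial, zMonomial]
  obtain ⟨g, rfl⟩ : ∃ g', g = g' + 2 := ⟨g - 2, by omega⟩
  rw [show g + 2 - 1 = g + 1 by omega, Nat.add_sub_cancel, pow_succ]
  field_simp

theorem iteratedDeriv_Zgen_mul (g m d : ℕ) (hg : 2 ≤ g) (hm : m + 2 ≤ 2 * g) :
    iteratedDeriv d (fun z => Zgen g m z * (1 / 2 - 1 / (2 * √(1 + 4 * z)))) 0
      = (iteratedDeriv d (zMonomial (2 * g - 2 - m) (g - 1)) 0
          - iteratedDeriv d (zMonomial (2 * g - 2 - m) (g - 2)) 0) / 2 := by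
  have h₀ : (0 : ℝ) < 1 + 4 * 0 := by norm_num
  have hEq : (fun z => Zgen g m z * (1 / 2 - 1 / (2 * √(1 + 4 * z)))) =ᶠ[𝓝 0]
      fun z => (zMonomial (2 * g - 2 - m) (g - 1) z - zMonomial (2 * g - 2 - m) (g - 2) z) / 2 :=
    eventually_one_add_four_mul_pos.mono fun z hz => Zgen_mul_eq g m hg hm hz
  rw [hEq.iteratedDeriv_eq, iteratedDeriv_div_const,
    iteratedDeriv_fun_sub (analyticAt_zMonomial _ _ h₀).contDiffAt
      (analyticAt_zMonomial _ _ h₀).contDiffAt]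

end SecantPlane

open SecantPlane in
theorem taylor_coeff_Palpha (d g m : ℕ) (hg : 2 * d + 1 ≤ g) (hm : m + 2 ≤ 2 * g) :
    AnalyticAt ℝ (fun z => Zgen g m z * (1 / 2 - 1 / (2 * Real.sqrt (1 + 4 * z)))) 0 ∧
    iteratedDeriv d (fun z => Zgen g m z * (1 / 2 - 1 / (2 * Real.sqrt (1 + 4 * z)))) 0
        / (d.factorial : ℝ) =
      ((g.factorial : ℝ) * ((2 * g - 2 - m).factorial : ℝ))
          / (2 * ((g - 2 * d).factorial : ℝ) * (d.factorial : ℝ)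
              * ((2 * g - 2 - m + d).factorial : ℝ))
        * ∑ k ∈ Finset.range (d + 1),
            ((ascPochhammer ℝ k).eval (-(g : ℝ) / 2 + (m : ℝ) / 2 + 1 - d)
                * (ascPochhammer ℝ k).eval (-(g : ℝ) / 2 + ((m : ℝ) + 3) / 2 - d)
                * (ascPochhammer ℝ k).eval (-(d : ℝ)))
              / ((ascPochhammer ℝ k).eval (((g : ℝ) + 1) / 2 - d)
                  * (ascPochhammer ℝ k).eval ((g : ℝ) / 2 + 1 - d)
                  * (k.factorial : ℝ))
      - ((g - 1).factorial : ℝ) * ((2 * g - 2 - m).factorial : ℝ)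
          / (2 * ((g - 2 * d - 1).factorial : ℝ) * (d.factorial : ℝ)
              * ((2 * g - 2 - m + d).factorial : ℝ))
        * ∑ k ∈ Finset.range (d + 1),
            ((ascPochhammer ℝ k).eval (-(g : ℝ) / 2 + (m : ℝ) / 2 + 1 - d)
                * (ascPochhammer ℝ k).eval (-(g : ℝ) / 2 + ((m : ℝ) + 1) / 2 - d)
                * (ascPochhammer ℝ k).eval (-(d : ℝ)))
              / ((ascPochhammer ℝ k).eval (((g : ℝ) + 1) / 2 - d)
                  * (ascPochhammer ℝ k).eval ((g : ℝ) / 2 - d)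
                  * (k.factorial : ℝ)) := by
  refine ⟨analyticAt_Zgen_mul g m (by norm_num), ?_⟩
  rcases Nat.eq_zero_or_pos d with rfl | hd
  -- `d = 0` allows `g = 1`, where `u ^ (g - 2)` is unavailable; both sides vanish there.
  · norm_num
    field_simp
    ring
  have ha : ((2 * g - 2 - m : ℕ) : ℝ) = 2 * g - 2 - m := by
    rw [Nat.cast_sub (by omega), Nat.cast_sub (by omega)]; push_cast; ring
  have hcast₁ : ((g - 1 : ℕ) : ℝ) = g - 1 := by rw [Nat.cast_sub (by omega), Nat.cast_one]
  have hcast₂ : ((g - 2 : ℕ) : ℝ) = g - 2 := by rw [Nat.cast_sub (by omega), Nat.cast_ofNat]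
  have hfact₁ := natCast_factorial_eq_mul_descPochhammer (R := ℝ) (show 2 * d ≤ g by omega)
  have hfact₂ := natCast_factorial_eq_mul_descPochhammer (R := ℝ) (show 2 * d ≤ g - 1 by omega)
  rw [show g - 1 - 2 * d = g - 2 * d - 1 by omega, hcast₁] at hfact₂
  have hgR : (2 * d + 1 : ℝ) ≤ g := by exact_mod_cast hg
  have hD₁ : 0 < (descPochhammer ℝ (2 * d)).eval (g : ℝ) :=
    descPochhammer_pos (by push_cast; linarith)
  have hD₂ : 0 < (descPochhammer ℝ (2 * d)).eval ((g : ℝ) - 1) :=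
    descPochhammer_pos (by push_cast; linarith)
  rw [iteratedDeriv_Zgen_mul g m d (by omega) hm, iteratedDeriv_zMonomial_zero _ _ _ (by omega),
    iteratedDeriv_zMonomial_zero _ _ _ (by omega), ← hypergeom32, ← hypergeom32,
    hypergeom32_swap d _ (-(g : ℝ) / 2 + ((m : ℝ) + 1) / 2 - d), ha, hcast₁, hcast₂,
    sub_add_cancel, show (g : ℝ) - 2 + 1 = g - 1 by ring,
    hypergeom32_eq_altPochSum_div d (y := g - (2 * g - 2 - m) - 2 * d) (x := g)
      (by ring) (by ring) (by ring) (by ring) (by linarith),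
    hypergeom32_eq_altPochSum_div d (y := g - 1 - (2 * g - 2 - m) - 2 * d) (x := g - 1)
      (by ring) (by ring) (by ring) (by ring) (by linarith), hfact₁, hfact₂]
  field_simp [hD₁.ne', hD₂.ne']
end

section
/- For all real numbers g and m and every real z with |z| < 1/4, one has (2/(√(1+4z)+1))^{2g−2−m} · (1+4z)^{(g−1)/2} = exp( Σ_{n=1}^{∞} ((−1)^{n−1}/n)·[ C(2n−1, n−1)·m + (4^{n−1} − C(2n−1, n−1))·(2g−2) ]·zⁿ ), where C(2n−1,n−1) is a binomial coefficient and the series on the right converges absolutely. -/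
/-! Taking logarithms, and substituting `x = -z`, the claim splits into the Mercator series
`-log (1 - 4x) / 4 = ∑ 4^k x^(k+1) / (k+1)` and
`log (2 / (√(1 - 4x) + 1)) = ∑ C(2k+1, k) x^(k+1) / (k+1)`.
The second one is proved by termwise integration from `0`: the derivative of the left-hand side,
`2 / (√(1 - 4x) (√(1 - 4x) + 1))`, is `(1/√(1 - 4x) - 1) / (2x)`, and
`1/√(1 - 4x) = ∑ C(2k, k) x^k` is the binomial series of exponent `-1/2`; dividing its tail by `2x`
gives `∑ C(2k+1, k) x^k` because `C(2k+2, k+1) = 2 C(2k+1, k)`.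
Absolute convergence comes for free, as summable real series are absolutely summable. -/

open Polynomial Set Metric
open scoped Nat

theorem ascPochhammer_eval_one_half (n : ℕ) :
    (ascPochhammer ℝ n).eval (1 / 2) = n ! * n.centralBinom / 4 ^ n := by
  induction n with
  | zero => simp
  | succ n ih =>
    have key : ((n : ℝ) + 1) * (n + 1).centralBinom = 2 * (2 * n + 1) * n.centralBinom := by
      exact_mod_cast Nat.succ_mul_centralBinom_succ n
    rw [ascPochhammer_succ_eval, ih, Nat.factorial_succ, Nat.cast_mul, Nat.cast_succ]
    field_simp
    linear_combination (-2 * 4 ^ n : ℝ) * key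

theorem Ring.multichoose_one_half (n : ℕ) :
    Ring.multichoose (1 / 2 : ℝ) n = n.centralBinom / 4 ^ n := by
  have h := Ring.factorial_nsmul_multichoose_eq_ascPochhammer (1 / 2 : ℝ) n
  rw [ascPochhammer_smeval_eq_eval, ascPochhammer_eval_one_half, nsmul_eq_mul, mul_div_assoc] at h
  exact mul_left_cancel₀ (by positivity) h

theorem hasSum_centralBinom_mul_pow {x : ℝ} (hx : |x| < 1 / 4) :
    HasSum (fun n => (n.centralBinom : ℝ) * x ^ n) (1 / √(1 - 4 * x)) := by
  have hmem : 4 * x ∈ eball (0 : ℝ) 1 := by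
    rw [mem_eball, edist_zero_right, ← ofReal_norm, ENNReal.ofReal_lt_one, Real.norm_eq_abs,
      abs_mul, abs_of_pos four_pos]
    linarith
  have h := (Real.one_div_one_sub_rpow_hasFPowerSeriesOnBall_zero (1 / 2)).hasSum hmem
  simp only [FormalMultilinearSeries.ofScalars_apply_eq, ← Ring.multichoose_eq,
    Ring.multichoose_one_half, zero_add, ← Real.sqrt_eq_rpow, smul_eq_mul] at h
  refine h.congr_fun fun n => ?_
  rw [mul_pow]
  field_simp

theorem Nat.centralBinom_succ_eq_two_mul_choose (k : ℕ) :
    (k + 1).centralBinom = 2 * (2 * k + 1).choose k := by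
  rw [Nat.centralBinom, show 2 * (k + 1) = (2 * k + 1) + 1 by ring, Nat.choose_succ_succ,
    Nat.choose_symm_half]
  ring

theorem hasSum_choose_two_mul_add_one_mul_pow {x : ℝ} (hx : |x| < 1 / 4) :
    HasSum (fun k => ((2 * k + 1).choose k : ℝ) * x ^ k)
      (2 / (√(1 - 4 * x) * (√(1 - 4 * x) + 1))) := by
  rcases eq_or_ne x 0 with rfl | hx0
  · convert hasSum_single (f := fun k => ((2 * k + 1).choose k : ℝ) * 0 ^ k) 0
      (fun k hk => by simp [hk]) using 1
    norm_num
  have hpos : 0 < 1 - 4 * x := by linarith [le_abs_self x]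
  have hsq := Real.sq_sqrt hpos.le
  have htail := ((hasSum_nat_add_iff' 1).2 (hasSum_centralBinom_mul_pow hx)).div_const (2 * x)
  have hval : 2 / (√(1 - 4 * x) * (√(1 - 4 * x) + 1))
      = (1 / √(1 - 4 * x) - ∑ i ∈ Finset.range 1, (i.centralBinom : ℝ) * x ^ i) / (2 * x) := by
    simp only [Finset.sum_range_one, Nat.centralBinom_zero, Nat.cast_one, pow_zero, mul_one]
    field_simp
    linear_combination hsq
  rw [hval]
  refine htail.congr_fun fun k => ?_
  rw [Nat.centralBinom_succ_eq_two_mul_choose, pow_succ]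
  push_cast
  field_simp

theorem hasSum_pow_succ_div_of_hasDerivAt {a : ℕ → ℝ} {c : ℝ} {f F : ℝ → ℝ} (hc : 0 < c)
    (ha : ∀ k, |a k| ≤ c ^ k) (hf : ∀ y, |y| < c⁻¹ → HasSum (fun k => a k * y ^ k) (f y))
    (hF : ∀ y, |y| < c⁻¹ → HasDerivAt F (f y) y) (hF0 : F 0 = 0) {x : ℝ} (hx : |x| < c⁻¹) :
    HasSum (fun k => a k * x ^ (k + 1) / (k + 1)) (F x) := by
  obtain ⟨r, hxr, hrc⟩ := exists_between hx
  have hr : 0 < r := (abs_nonneg x).trans_lt hxr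
  have hball : ∀ y ∈ ball (0 : ℝ) r, |y| < c⁻¹ := fun y hy => (mem_ball_zero_iff.1 hy).trans hrc
  have hpre := (convex_ball (0 : ℝ) r).isPreconnected
  have hgeom : Summable fun k => (c * r) ^ k := summable_geometric_of_lt_one (by positivity)
    ((lt_div_iff₀' hc).1 (by rwa [one_div]))
  have hderiv : ∀ k y, HasDerivAt (fun y => a k * y ^ (k + 1) / (k + 1)) (a k * y ^ k) y := by
    intro k y
    refine (((hasDerivAt_pow (k + 1) y).const_mul (a k)).div_const ((k : ℝ) + 1)).congr_deriv ?_
    push_cast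
    field_simp
  have hbound : ∀ k, ∀ y ∈ ball (0 : ℝ) r, ‖a k * y ^ k‖ ≤ (c * r) ^ k := by
    intro k y hy
    rw [norm_mul, norm_pow, Real.norm_eq_abs, Real.norm_eq_abs, mul_pow]
    exact mul_le_mul (ha k) (pow_le_pow_left₀ (abs_nonneg y) (mem_ball_zero_iff.1 hy).le k)
      (by positivity) (by positivity)
  have hsum0 : Summable fun k => a k * (0 : ℝ) ^ (k + 1) / (k + 1) := by simp
  have hG : ∀ y ∈ ball (0 : ℝ) r,
      HasDerivAt (fun y => ∑' k, a k * y ^ (k + 1) / (k + 1)) (f y) y := by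
    intro y hy
    rw [← (hf y (hball y hy)).tsum_eq]
    exact hasDerivAt_tsum_of_isPreconnected hgeom isOpen_ball hpre (fun k y _ => hderiv k y)
      hbound (mem_ball_self hr) hsum0 hy
  have hFG : EqOn F (fun y => ∑' k, a k * y ^ (k + 1) / (k + 1)) (ball 0 r) :=
    isOpen_ball.eqOn_of_deriv_eq hpre
      (fun y hy => (hF y (hball y hy)).differentiableAt.differentiableWithinAt)
      (fun y hy => (hG y hy).differentiableAt.differentiableWithinAt)
      (fun y hy => by rw [(hF y (hball y hy)).deriv, (hG y hy).deriv]) (mem_ball_self hr)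
      (by simp [hF0])
  have hxball : x ∈ ball (0 : ℝ) r := mem_ball_zero_iff.2 hxr
  rw [hFG hxball]
  exact (summable_of_summable_hasDerivAt_of_isPreconnected hgeom isOpen_ball hpre
    (fun k y _ => hderiv k y) hbound (mem_ball_self hr) hsum0 hxball).hasSum

theorem hasDerivAt_log_two_div_sqrt_add_one {x : ℝ} (hx : 4 * x < 1) :
    HasDerivAt (fun y => Real.log (2 / (√(1 - 4 * y) + 1)))
      (2 / (√(1 - 4 * x) * (√(1 - 4 * x) + 1))) x := by
  have hpos : 0 < 1 - 4 * x := by linarith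
  have hsqrt := (((hasDerivAt_id' x).const_mul 4).const_sub 1).sqrt hpos.ne'
  refine (((hasDerivAt_const x (2 : ℝ)).fun_div (hsqrt.add_const 1) (by positivity)).log
    (by positivity)).congr_deriv ?_
  field_simp
  ring

theorem hasSum_choose_two_mul_add_one_mul_pow_succ_div {x : ℝ} (hx : |x| < 1 / 4) :
    HasSum (fun k : ℕ => ((2 * k + 1).choose k : ℝ) * x ^ (k + 1) / (k + 1))
      (Real.log (2 / (√(1 - 4 * x) + 1))) := by
  have h4 : ∀ y : ℝ, |y| < 4⁻¹ ↔ |y| < 1 / 4 := fun y => by rw [one_div]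
  refine hasSum_pow_succ_div_of_hasDerivAt four_pos (fun k => ?_)
    (fun y hy => hasSum_choose_two_mul_add_one_mul_pow ((h4 y).1 hy))
    (fun y hy => hasDerivAt_log_two_div_sqrt_add_one (by linarith [le_abs_self y, (h4 y).1 hy]))
    (by norm_num) ((h4 x).2 hx)
  rw [abs_of_nonneg (by positivity)]
  exact_mod_cast Nat.choose_middle_le_pow k

theorem exponential_form_of_generating_function (g m z : ℝ) (hz : |z| < 1 / 4) :
    Summable (fun k : ℕ =>
      |((-1 : ℝ) ^ k / ((k : ℝ) + 1)) *
          ((Nat.choose (2 * k + 1) k : ℝ) * m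
            + ((4 : ℝ) ^ k - (Nat.choose (2 * k + 1) k : ℝ)) * (2 * g - 2))
          * z ^ (k + 1)|) ∧
    (2 / (Real.sqrt (1 + 4 * z) + 1)) ^ (2 * g - 2 - m) * (1 + 4 * z) ^ ((g - 1) / 2) =
      Real.exp (∑' k : ℕ,
        ((-1 : ℝ) ^ k / ((k : ℝ) + 1)) *
          ((Nat.choose (2 * k + 1) k : ℝ) * m
            + ((4 : ℝ) ^ k - (Nat.choose (2 * k + 1) k : ℝ)) * (2 * g - 2))
          * z ^ (k + 1)) := by
  have hz' : |-z| < 1 / 4 := by rwa [abs_neg]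
  have h4z : |4 * -z| < 1 := by rw [abs_mul, abs_of_pos four_pos]; linarith
  have hpos : 0 < 1 + 4 * z := by linarith [neg_abs_le z]
  have hchoose := (hasSum_choose_two_mul_add_one_mul_pow_succ_div hz').mul_left (2 * g - 2 - m)
  have hfour := ((Real.hasSum_pow_div_log_of_abs_lt_one h4z).div_const 4).mul_left (-(2 * g - 2))
  have hseries := (hchoose.add hfour).congr_fun fun k : ℕ =>
    show ((-1 : ℝ) ^ k / ((k : ℝ) + 1)) * ((Nat.choose (2 * k + 1) k : ℝ) * m
        + ((4 : ℝ) ^ k - (Nat.choose (2 * k + 1) k : ℝ)) * (2 * g - 2)) * z ^ (k + 1) = _ by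
      simp only [mul_neg, neg_pow z, neg_pow (4 * z), mul_pow]
      ring
  rw [mul_neg, sub_neg_eq_add] at hseries
  refine ⟨summable_abs_iff.2 hseries.summable, ?_⟩
  rw [hseries.tsum_eq, Real.rpow_def_of_pos (by positivity), Real.rpow_def_of_pos hpos,
    ← Real.exp_add]
  congr 1
  ring
end

section
/- Let d ≥ 2 be an integer. For a subgraph G of the complete graph on the vertex set {1,…,d} and for 2 ≤ j ≤ d, let indeg(G,j) = #{ i < j : {i,j} is an edge of G }, and set w_G = ∏_{j=2}^{d} (indeg(G,j))!. Then, summing over all spanning trees T of the complete graph on {1,…,d}: (2d−1) · Σ_T w_T = C(2d−1, d−1) · (d−1)!. -/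
/-!
Let `m` be the largest vertex of a finite vertex set `s`, and `F(s)` the total weight of the
trees on `s`. In a tree `T` on `s` every neighbour `v` of `m` is a lower neighbour, and cutting
the edge `vm` is a bijection from pairs `(T, v)` onto triples (a set `B ∌ m` containing `v`,
a tree `T₁` on `B`, a tree `T₂` on `s \ B`). As `v < m`, the cut changes only the indegree of
`m`, which drops by one, so `w_T = indeg T m * w_T₁ * w_T₂` and the factor `indeg T m` is
absorbed by the choice of `v`. Hence `F(s) = ∑_{B ⊆ s \ {m}} |B| F(B) F(s \ B)`, the recurrence
solved by `catalan (n - 1) * (n - 1)!` for `|s| = n`; finally `(2n+1) catalan n = C(2n+1, n)`.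
-/

/-- `indeg(G,j) = #{i < j : {i,j} is an edge of G}`, the indegree of vertex `j`. -/
noncomputable def indeg {d : ℕ} (G : SimpleGraph (Fin d)) (j : Fin d) : ℕ :=
  {i : Fin d | i < j ∧ G.Adj i j}.ncard

/-- The weight `w_G = ∏_j (indeg(G,j))!` of a subgraph of the complete graph. -/
noncomputable def graphWeight {d : ℕ} (G : SimpleGraph (Fin d)) : ℕ :=
  ∏ j : Fin d, (indeg G j).factorial

open Finset SimpleGraph
open scoped Nat

namespace SimpleGraph

variable {V : Type*} {G H T T₁ T₂ : SimpleGraph V} {S s B C : Set V} {a b u w v m : V}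

@[simp] lemma spanningCoe_induce_adj :
    (G.induce S).spanningCoe.Adj a b ↔ G.Adj a b ∧ a ∈ S ∧ b ∈ S := by
  simp

lemma support_spanningCoe_induce_subset : (G.induce S).spanningCoe.support ⊆ S :=
  fun _ ⟨_, h⟩ ↦ (spanningCoe_induce_adj.mp h).2.1

lemma spanningCoe_induce_sup_compl (hS : ∀ ⦃x y⦄, G.Adj x y → x ∈ S → y ∈ S) :
    (G.induce S).spanningCoe ⊔ (G.induce Sᶜ).spanningCoe = G := by
  ext x y
  simp only [sup_adj, spanningCoe_induce_adj, Set.mem_compl_iff]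
  by_cases hx : x ∈ S
  · have := @hS x y
    tauto
  · have := @hS y x
    have := G.adj_comm x y
    tauto

lemma spanningCoe_induce_sup_eq_left (hG : G.support ⊆ S) (hH : Disjoint H.support S) :
    ((G ⊔ H).induce S).spanningCoe = G := by
  ext x y
  simp only [spanningCoe_induce_adj, sup_adj]
  constructor
  · rintro ⟨h, hx, -⟩
    exact h.resolve_right fun h' ↦ hH.notMem_of_mem_left h'.mem_support_left hx
  · exact fun h ↦ ⟨.inl h, hG h.mem_support_left, hG h.mem_support_right⟩

lemma Walk.edges_subset_edgeSet_of_disjoint_support (h : Disjoint G.support H.support)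
    (p : (G ⊔ H).Walk a b) (ha : a ∉ H.support) : ∀ e ∈ p.edges, e ∈ G.edgeSet := by
  induction p with
  | nil => simp
  | cons hac q ih =>
    have hG := hac.resolve_right fun h' ↦ ha h'.mem_support_left
    have hc := h.notMem_of_mem_left hG.mem_support_right
    simpa [Walk.edges_cons, hG] using ih hc

lemma Reachable.of_sup_of_disjoint_support (h : Disjoint G.support H.support)
    (hab : (G ⊔ H).Reachable a b) (ha : a ∉ H.support) : G.Reachable a b :=
  hab.elim fun p ↦ ⟨p.transfer G (p.edges_subset_edgeSet_of_disjoint_support h ha)⟩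

lemma IsAcyclic.sup_of_disjoint_support (hG : G.IsAcyclic) (hH : H.IsAcyclic)
    (h : Disjoint G.support H.support) : (G ⊔ H).IsAcyclic := by
  intro a c hc
  by_cases ha : a ∈ H.support
  · have ha' : a ∉ G.support := h.notMem_of_mem_right ha
    have hc' := hc.mapLe (sup_comm G H).le
    exact hH _ (hc'.transfer ((c.mapLe _).edges_subset_edgeSet_of_disjoint_support h.symm ha'))
  · exact hG _ (hc.transfer (c.edges_subset_edgeSet_of_disjoint_support h ha))

lemma Reachable.of_sup_edge (h : (G ⊔ edge u w).Reachable a b) :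
    G.Reachable a b ∨ G.Reachable a u ∨ G.Reachable a w := by
  obtain ⟨p⟩ := h
  induction p with
  | nil => exact .inl .rfl
  | cons hac _ ih =>
    rcases hac with hac | hac
    · exact ih.imp hac.reachable.trans (Or.imp hac.reachable.trans hac.reachable.trans)
    · rcases (edge_adj _ _ _ _).mp hac with ⟨⟨rfl, -⟩ | ⟨rfl, -⟩, -⟩
      · exact .inr (.inl .rfl)
      · exact .inr (.inr .rfl)

lemma deleteEdges_sup_edge_of_adj (h : G.Adj u w) : G.deleteEdges {s(u, w)} ⊔ edge u w = G := by
  ext x y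
  rw [sup_adj, deleteEdges_adj, Set.mem_singleton_iff, adj_edge]
  by_cases hxy : s(u, w) = s(x, y)
  · have hG : G.Adj x y := by rwa [← mem_edgeSet, ← hxy]
    simp [hxy, hG, hG.ne]
  · simp only [hxy, Ne.symm hxy, not_false_eq_true, and_true, false_and, or_false]

lemma sup_edge_deleteEdges_of_not_adj (h : ¬G.Adj u w) :
    (G ⊔ edge u w).deleteEdges {s(u, w)} = G := by
  simp [edge, h]

variable (S) in
/-- Trees on a subset `S` of the vertices stay graphs on all of `V`, so that `indeg` and
`graphWeight` apply to them unchanged. -/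
structure IsTreeOn (G : SimpleGraph V) : Prop where
  support_subset : G.support ⊆ S
  reachable : ∀ ⦃a⦄, a ∈ S → ∀ ⦃b⦄, b ∈ S → G.Reachable a b
  isAcyclic : G.IsAcyclic

lemma isTreeOn_univ_iff [Nonempty V] : IsTreeOn Set.univ G ↔ G.IsTree :=
  ⟨fun h ↦ ⟨⟨fun _ _ ↦ h.reachable trivial trivial⟩, h.isAcyclic⟩,
    fun h ↦ ⟨Set.subset_univ _, fun a _ b _ ↦ h.connected a b, h.isAcyclic⟩⟩

lemma isTreeOn_singleton_iff {x : V} : IsTreeOn {x} G ↔ G = ⊥ := by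
  refine ⟨fun h ↦ ?_, ?_⟩
  · ext a b
    refine iff_of_false (fun hab ↦ hab.ne ?_) id
    rw [h.support_subset hab.mem_support_left, h.support_subset hab.mem_support_right]
  · rintro rfl
    exact ⟨by simp, fun a ha b hb ↦ by rw [ha, hb], isAcyclic_bot⟩

lemma IsTreeOn.sup_edge (h₁ : IsTreeOn B T₁) (h₂ : IsTreeOn C T₂) (hBC : Disjoint B C)
    (hv : v ∈ B) (hm : m ∈ C) : IsTreeOn (B ∪ C) (T₁ ⊔ T₂ ⊔ edge v m) := by
  have hdisj : Disjoint T₁.support T₂.support :=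
    hBC.mono h₁.support_subset h₂.support_subset
  have hvm : v ≠ m := fun h ↦ hBC.notMem_of_mem_left hv (h ▸ hm)
  refine ⟨?_, ?_, ?_⟩
  · rintro x ⟨y, (hxy | hxy) | hxy⟩
    · exact .inl (h₁.support_subset hxy.mem_support_left)
    · exact .inr (h₂.support_subset hxy.mem_support_left)
    · rcases (edge_adj _ _ _ _).mp hxy with ⟨⟨rfl, -⟩ | ⟨rfl, -⟩, -⟩
      exacts [.inl hv, .inr hm]
  · have to_v : ∀ a ∈ B ∪ C, (T₁ ⊔ T₂ ⊔ edge v m).Reachable a v := by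
      rintro a (ha | ha)
      · exact (h₁.reachable ha hv).mono (le_sup_left.trans le_sup_left)
      · refine ((h₂.reachable ha hm).mono (le_sup_right.trans le_sup_left)).trans ?_
        exact Adj.reachable (.inr ((edge_adj _ _ _ _).mpr ⟨.inr ⟨rfl, rfl⟩, hvm.symm⟩))
    exact fun a ha b hb ↦ (to_v a ha).trans (to_v b hb).symm
  · refine (h₁.isAcyclic.sup_of_disjoint_support h₂.isAcyclic hdisj).sup_edge_of_not_reachable
      fun hr ↦ hBC.notMem_of_mem_right hm (h₁.support_subset ?_)
    have hv₂ : v ∉ T₂.support := hBC.notMem_of_mem_left hv ∘ (h₂.support_subset ·)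
    exact mem_support_of_reachable hvm.symm (hr.of_sup_of_disjoint_support hdisj hv₂).symm

def cutSide (T : SimpleGraph V) (v m : V) : Set V :=
  {x | (T.deleteEdges {s(v, m)}).Reachable v x}

def cutLeft (T : SimpleGraph V) (v m : V) : SimpleGraph V :=
  ((T.deleteEdges {s(v, m)}).induce (cutSide T v m)).spanningCoe

def cutRight (T : SimpleGraph V) (v m : V) : SimpleGraph V :=
  ((T.deleteEdges {s(v, m)}).induce (cutSide T v m)ᶜ).spanningCoe

lemma mem_cutSide_self : v ∈ cutSide T v m := Reachable.rfl

lemma cutLeft_sup_cutRight : cutLeft T v m ⊔ cutRight T v m = T.deleteEdges {s(v, m)} :=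
  spanningCoe_induce_sup_compl fun _ _ hxy hx ↦ Reachable.trans hx hxy.reachable

lemma cutLeft_sup_cutRight_sup_edge (h : T.Adj v m) :
    cutLeft T v m ⊔ cutRight T v m ⊔ edge v m = T := by
  rw [cutLeft_sup_cutRight, deleteEdges_sup_edge_of_adj h]

lemma disjoint_support_cutLeft_cutRight :
    Disjoint (cutLeft T v m).support (cutRight T v m).support :=
  disjoint_compl_right.mono support_spanningCoe_induce_subset support_spanningCoe_induce_subset

lemma IsTreeOn.notMem_cutSide (hT : IsTreeOn s T) (h : T.Adj v m) : m ∉ cutSide T v m :=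
  isBridge_iff.mp (isAcyclic_iff_forall_adj_isBridge.mp hT.isAcyclic h)

lemma IsTreeOn.cutSide_subset (hT : IsTreeOn s T) (h : T.Adj v m) : cutSide T v m ⊆ s := by
  intro x hx
  obtain rfl | hxv := eq_or_ne x v
  · exact hT.support_subset h.mem_support_left
  · exact hT.support_subset
      (support_mono (deleteEdges_le _) (mem_support_of_reachable hxv hx.symm))

lemma isTreeOn_cutLeft (hT : IsTreeOn s T) : IsTreeOn (cutSide T v m) (cutLeft T v m) := by
  refine ⟨support_spanningCoe_induce_subset, fun a ha b hb ↦ ?_, ?_⟩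
  · have hab : (cutLeft T v m ⊔ cutRight T v m).Reachable a b := by
      rw [cutLeft_sup_cutRight]; exact ha.symm.trans hb
    exact hab.of_sup_of_disjoint_support disjoint_support_cutLeft_cutRight
      fun h ↦ support_spanningCoe_induce_subset h ha
  · exact hT.isAcyclic.anti ((spanningCoe_induce_le _ _).trans (deleteEdges_le _))

lemma isTreeOn_cutRight (hT : IsTreeOn s T) (h : T.Adj v m) :
    IsTreeOn (s \ cutSide T v m) (cutRight T v m) := by
  refine ⟨fun x hx ↦ ⟨?_, support_spanningCoe_induce_subset hx⟩, fun a ha b hb ↦ ?_, ?_⟩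
  · exact hT.support_subset
      (support_mono ((spanningCoe_induce_le _ _).trans (deleteEdges_le _)) hx)
  · have to_m : ∀ x ∈ s \ cutSide T v m, (T.deleteEdges {s(v, m)}).Reachable x m := by
      intro x hx
      have hxm := hT.reachable hx.1 (hT.support_subset h.mem_support_right)
      rw [← deleteEdges_sup_edge_of_adj h] at hxm
      rcases hxm.of_sup_edge with hxm | hxv | hxm
      exacts [hxm, absurd hxv.symm hx.2, hxm]
    have hab : (cutRight T v m ⊔ cutLeft T v m).Reachable a b := by
      rw [sup_comm, cutLeft_sup_cutRight]; exact (to_m a ha).trans (to_m b hb).symm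
    exact hab.of_sup_of_disjoint_support disjoint_support_cutLeft_cutRight.symm
      fun h ↦ ha.2 (support_spanningCoe_induce_subset h)
  · exact hT.isAcyclic.anti ((spanningCoe_induce_le _ _).trans (deleteEdges_le _))

section Glue

variable (h₁ : IsTreeOn B T₁) (h₂ : IsTreeOn C T₂) (hBC : Disjoint B C)
  (hv : v ∈ B) (hm : m ∈ C)
include h₁ h₂ hBC hv hm

lemma sup_sup_edge_deleteEdges :
    (T₁ ⊔ T₂ ⊔ edge v m).deleteEdges {s(v, m)} = T₁ ⊔ T₂ := by
  refine sup_edge_deleteEdges_of_not_adj fun h ↦ ?_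
  rcases h with h | h
  · exact hBC.notMem_of_mem_right hm (h₁.support_subset h.mem_support_right)
  · exact hBC.notMem_of_mem_left hv (h₂.support_subset h.mem_support_left)

lemma cutSide_sup_edge : cutSide (T₁ ⊔ T₂ ⊔ edge v m) v m = B := by
  ext x
  rw [cutSide, sup_sup_edge_deleteEdges h₁ h₂ hBC hv hm]
  refine ⟨fun hx ↦ ?_, fun hx ↦ (h₁.reachable hv hx).mono le_sup_left⟩
  have hx₁ := hx.of_sup_of_disjoint_support (hBC.mono h₁.support_subset h₂.support_subset)
    (hBC.notMem_of_mem_left hv ∘ (h₂.support_subset ·))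
  obtain rfl | hxv := eq_or_ne x v
  · exact hv
  · exact h₁.support_subset (mem_support_of_reachable hxv hx₁.symm)

lemma cutLeft_sup_edge : cutLeft (T₁ ⊔ T₂ ⊔ edge v m) v m = T₁ := by
  rw [cutLeft, sup_sup_edge_deleteEdges h₁ h₂ hBC hv hm, cutSide_sup_edge h₁ h₂ hBC hv hm]
  exact spanningCoe_induce_sup_eq_left h₁.support_subset (hBC.symm.mono_left h₂.support_subset)

lemma cutRight_sup_edge : cutRight (T₁ ⊔ T₂ ⊔ edge v m) v m = T₂ := by
  rw [cutRight, sup_sup_edge_deleteEdges h₁ h₂ hBC hv hm, cutSide_sup_edge h₁ h₂ hBC hv hm,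
    sup_comm]
  exact spanningCoe_induce_sup_eq_left (h₂.support_subset.trans hBC.subset_compl_left)
    (disjoint_compl_right.mono_left h₁.support_subset)

end Glue

end SimpleGraph

section Weight

variable {d : ℕ} {G H : SimpleGraph (Fin d)} {v m j : Fin d}

lemma indeg_eq_zero_of_notMem_support (hj : j ∉ G.support) : indeg G j = 0 := by
  rw [indeg, Set.ncard_eq_zero]
  exact Set.eq_empty_of_forall_notMem fun _ ⟨_, h⟩ ↦ hj h.mem_support_right

lemma indeg_sup_of_notMem_support (hj : j ∉ H.support) : indeg (G ⊔ H) j = indeg G j := by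
  simp only [indeg, sup_adj]
  congr 1
  ext i
  exact and_congr_right fun _ ↦ or_iff_left fun h ↦ hj h.mem_support_right

lemma graphWeight_sup (h : Disjoint G.support H.support) :
    graphWeight (G ⊔ H) = graphWeight G * graphWeight H := by
  simp only [graphWeight, ← prod_mul_distrib]
  refine prod_congr rfl fun j _ ↦ ?_
  by_cases hj : j ∈ H.support
  · rw [sup_comm, indeg_sup_of_notMem_support (h.notMem_of_mem_right hj),
      indeg_eq_zero_of_notMem_support (h.notMem_of_mem_right hj), Nat.factorial_zero, one_mul]
  · rw [indeg_sup_of_notMem_support hj, indeg_eq_zero_of_notMem_support hj, Nat.factorial_zero,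
      mul_one]

lemma indeg_sup_edge (hvm : v < m) (hG : ¬G.Adj v m) (j : Fin d) :
    indeg (G ⊔ edge v m) j = indeg G j + if j = m then 1 else 0 := by
  split_ifs with hj
  · subst hj
    have : {i | i < j ∧ (G ⊔ edge v j).Adj i j} = insert v {i | i < j ∧ G.Adj i j} := by
      ext i
      simp only [sup_adj, edge_adj, Set.mem_ofPred_eq, Set.mem_insert_iff]
      grind
    rw [indeg, indeg, this, Set.ncard_insert_of_notMem fun h ↦ hG h.2]
  · simp only [indeg, sup_adj, edge_adj, add_zero]
    congr! 3 with i
    grind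

lemma graphWeight_sup_edge (hvm : v < m) (hG : ¬G.Adj v m) :
    graphWeight (G ⊔ edge v m) = indeg (G ⊔ edge v m) m * graphWeight G := by
  simp only [graphWeight, ← mul_prod_erase univ _ (mem_univ m), indeg_sup_edge hvm hG,
    if_pos, ← mul_assoc, ← Nat.factorial_succ]
  congr 1
  refine prod_congr rfl fun j hj ↦ ?_
  rw [if_neg (ne_of_mem_erase hj), add_zero]

end Weight

lemma Finset.sum_eq_of_forall_card_mul_eq {ι : Type*} {t : Finset ι} {f : ι → ℕ} {c : ℕ}
    (ht : t.Nonempty) (h : ∀ i ∈ t, c = #t * f i) : ∑ i ∈ t, f i = c := by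
  obtain ⟨i₀, hi₀⟩ := ht
  have hpos : 0 < #t := card_pos.mpr ⟨i₀, hi₀⟩
  have hconst : ∀ i ∈ t, f i = f i₀ := fun i hi ↦
    Nat.eq_of_mul_eq_mul_left hpos ((h i hi).symm.trans (h i₀ hi₀))
  rw [sum_const_nat hconst, ← h i₀ hi₀]

lemma sum_choose_mul_catalan_mul_factorial (n : ℕ) :
    ∑ k ∈ range (n + 2), (n + 1).choose k *
        (k * (catalan (k - 1) * (k - 1)! * (catalan (n + 1 - k) * (n + 1 - k)!))) =
      catalan (n + 1) * (n + 1)! := by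
  have hterm : ∀ i ∈ range (n + 1), (n + 1).choose (i + 1) * ((i + 1) *
      (catalan (i + 1 - 1) * (i + 1 - 1)! * (catalan (n + 1 - (i + 1)) * (n + 1 - (i + 1))!))) =
      (n + 1)! * (catalan i * catalan (n - i)) := by
    intro i hi
    have hfact := Nat.choose_mul_factorial_mul_factorial (n := n + 1) (k := i + 1)
      (Nat.succ_le_succ (mem_range_succ_iff.mp hi))
    rw [Nat.add_sub_cancel, Nat.add_sub_add_right] at *
    rw [← hfact, Nat.factorial_succ]
    ring
  -- the `k = 0` term, where `k - 1` truncates, vanishes because of its factor `k`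
  rw [sum_range_succ', sum_congr rfl hterm, ← mul_sum, catalan_succ, Fin.sum_univ_eq_sum_range
    (fun i ↦ catalan i * catalan (n - i))]
  simp [mul_comm]

lemma two_mul_add_one_mul_catalan (n : ℕ) : (2 * n + 1) * catalan n = (2 * n + 1).choose n := by
  refine Nat.eq_of_mul_eq_mul_left n.succ_pos ?_
  calc (n + 1) * ((2 * n + 1) * catalan n) = (2 * n + 1) * (2 * n).choose n := by
        rw [mul_left_comm, succ_mul_catalan_eq_centralBinom, Nat.centralBinom]
    _ = (n + 1) * (2 * n + 1).choose n := by
        rw [Nat.add_one_mul_choose_eq, Nat.choose_symm_half, mul_comm]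

section Count

open scoped Classical

variable {d : ℕ} {s : Finset (Fin d)} {T : SimpleGraph (Fin d)} {v m : Fin d}

noncomputable def treesOn (s : Finset (Fin d)) : Finset (SimpleGraph (Fin d)) :=
  univ.filter (IsTreeOn ↑s)

noncomputable def treeSum (s : Finset (Fin d)) : ℕ :=
  ∑ T ∈ treesOn s, graphWeight T

@[simp] lemma mem_treesOn : T ∈ treesOn s ↔ IsTreeOn ↑s T := by
  simp [treesOn]

lemma SimpleGraph.IsTreeOn.lt_of_adj (hT : IsTreeOn ↑s T) (hmax : ∀ x ∈ s, x ≤ m)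
    (h : T.Adj v m) : v < m :=
  (hmax v (hT.support_subset h.mem_support_left)).lt_of_ne h.ne

lemma SimpleGraph.IsTreeOn.indeg_eq_card (hT : IsTreeOn ↑s T) (hmax : ∀ x ∈ s, x ≤ m) :
    indeg T m = #(univ.filter (T.Adj · m)) := by
  rw [indeg, ← Set.ncard_coe_finset, coe_filter_univ]
  congr 1
  ext i
  exact and_iff_right_of_imp (hT.lt_of_adj hmax)

lemma SimpleGraph.IsTreeOn.graphWeight_eq_indeg_mul (hT : IsTreeOn ↑s T)
    (hmax : ∀ x ∈ s, x ≤ m) (h : T.Adj v m) :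
    graphWeight T = indeg T m * (graphWeight (cutLeft T v m) * graphWeight (cutRight T v m)) := by
  have hnadj : ¬(cutLeft T v m ⊔ cutRight T v m).Adj v m := by simp [cutLeft_sup_cutRight]
  conv_lhs => rw [← cutLeft_sup_cutRight_sup_edge h]
  rw [graphWeight_sup_edge (hT.lt_of_adj hmax h) hnadj, cutLeft_sup_cutRight_sup_edge h,
    graphWeight_sup disjoint_support_cutLeft_cutRight]

lemma SimpleGraph.IsTreeOn.exists_adj (hT : IsTreeOn ↑s T) (hm : m ∈ s) (hs : 2 ≤ #s) :
    ∃ v, T.Adj v m := by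
  obtain ⟨a, ha, ham⟩ := exists_mem_ne hs m
  obtain ⟨w, hw⟩ := mem_support_of_reachable ham.symm (hT.reachable hm ha)
  exact ⟨w, hw.symm⟩

lemma SimpleGraph.IsTreeOn.sum_cut_eq_graphWeight (hT : IsTreeOn ↑s T) (hm : m ∈ s)
    (hmax : ∀ x ∈ s, x ≤ m) (hs : 2 ≤ #s) :
    ∑ v ∈ univ.filter (T.Adj · m), graphWeight (cutLeft T v m) * graphWeight (cutRight T v m) =
      graphWeight T := by
  obtain ⟨v, hv⟩ := hT.exists_adj hm hs
  refine sum_eq_of_forall_card_mul_eq ⟨v, by simpa using hv⟩ fun w hw ↦ ?_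
  rw [← hT.indeg_eq_card hmax]
  exact hT.graphWeight_eq_indeg_mul hmax (mem_filter.mp hw).2

lemma sum_cut_eq_sum_glue (hm : m ∈ s) :
    ∑ p ∈ (treesOn s).sigma (fun T ↦ univ.filter (T.Adj · m)),
        graphWeight (cutLeft p.1 p.2 m) * graphWeight (cutRight p.1 p.2 m) =
      ∑ q ∈ (s.erase m).powerset.sigma (fun B ↦ B ×ˢ (treesOn B ×ˢ treesOn (s \ B))),
        graphWeight q.2.2.1 * graphWeight q.2.2.2 := by
  have hm_sdiff {B : Finset (Fin d)} (hB : B ⊆ s.erase m) : m ∈ (↑s \ ↑B : Set (Fin d)) :=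
    ⟨hm, fun h ↦ notMem_erase m s (hB h)⟩
  refine sum_nbij'
    (fun p ↦ ⟨(cutSide p.1 p.2 m).toFinset, p.2, cutLeft p.1 p.2 m, cutRight p.1 p.2 m⟩)
    (fun q ↦ ⟨q.2.2.1 ⊔ q.2.2.2 ⊔ edge q.2.1 m, q.2.1⟩) ?_ ?_ ?_ ?_ fun _ _ ↦ rfl
  · rintro ⟨T, v⟩ hp
    simp only [mem_sigma, mem_treesOn, mem_filter, mem_univ, true_and] at hp
    obtain ⟨hT, hv⟩ := hp
    simp only [mem_sigma, mem_powerset, mem_product, mem_treesOn, Set.coe_toFinset,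
      Set.mem_toFinset, coe_sdiff]
    refine ⟨fun x hx ↦ ?_, mem_cutSide_self, isTreeOn_cutLeft hT, isTreeOn_cutRight hT hv⟩
    rw [Set.mem_toFinset] at hx
    exact mem_erase.mpr ⟨fun h ↦ hT.notMem_cutSide hv (h ▸ hx), hT.cutSide_subset hv hx⟩
  · rintro ⟨B, v, T₁, T₂⟩ hq
    simp only [mem_sigma, mem_powerset, mem_product, mem_treesOn, coe_sdiff] at hq
    obtain ⟨hB, hv, h₁, h₂⟩ := hq
    have htree := h₁.sup_edge h₂ disjoint_sdiff_self_right hv (hm_sdiff hB)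
    rw [Set.union_sdiff_cancel (coe_subset.mpr (hB.trans (erase_subset m s)))] at htree
    simp only [mem_sigma, mem_treesOn, mem_filter, mem_univ, true_and]
    refine ⟨htree, .inr ((edge_adj _ _ _ _).mpr ⟨.inl ⟨rfl, rfl⟩, ?_⟩)⟩
    exact fun h ↦ (hm_sdiff hB).2 (h ▸ hv)
  · rintro ⟨T, v⟩ hp
    simp only [mem_sigma, mem_filter, mem_univ, true_and] at hp
    simp only [cutLeft_sup_cutRight_sup_edge hp.2]
  · rintro ⟨B, v, T₁, T₂⟩ hq
    simp only [mem_sigma, mem_powerset, mem_product, mem_treesOn, coe_sdiff] at hq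
    obtain ⟨hB, hv, h₁, h₂⟩ := hq
    have hBC : Disjoint (↑B : Set (Fin d)) (↑s \ ↑B) := disjoint_sdiff_self_right
    have hm' := hm_sdiff hB
    simp only [cutSide_sup_edge h₁ h₂ hBC hv hm', cutLeft_sup_edge h₁ h₂ hBC hv hm',
      cutRight_sup_edge h₁ h₂ hBC hv hm', toFinset_coe]

lemma treeSum_eq_sum_powerset (hm : m ∈ s) (hmax : ∀ x ∈ s, x ≤ m) (hs : 2 ≤ #s) :
    treeSum s = ∑ B ∈ (s.erase m).powerset, #B * (treeSum B * treeSum (s \ B)) := by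
  calc treeSum s
      = ∑ T ∈ treesOn s, ∑ v ∈ univ.filter (T.Adj · m),
          graphWeight (cutLeft T v m) * graphWeight (cutRight T v m) :=
        sum_congr rfl fun T hT ↦ ((mem_treesOn.mp hT).sum_cut_eq_graphWeight hm hmax hs).symm
    _ = ∑ B ∈ (s.erase m).powerset, ∑ q ∈ B ×ˢ (treesOn B ×ˢ treesOn (s \ B)),
          graphWeight q.2.1 * graphWeight q.2.2 := by
        rw [sum_sigma', sum_cut_eq_sum_glue hm, sum_sigma]
    _ = _ := by
        refine sum_congr rfl fun B _ ↦ ?_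
        simp only [sum_product, sum_const, smul_eq_mul, treeSum, sum_mul_sum]

@[simp] lemma graphWeight_bot : graphWeight (⊥ : SimpleGraph (Fin d)) = 1 :=
  prod_eq_one fun j _ ↦ by rw [indeg_eq_zero_of_notMem_support (by simp), Nat.factorial_zero]

lemma treeSum_singleton (x : Fin d) : treeSum {x} = 1 := by
  have : treesOn {x} = {⊥} := by ext T; simp [isTreeOn_singleton_iff]
  rw [treeSum, this, sum_singleton, graphWeight_bot]

theorem treeSum_eq_catalan_mul_factorial (n : ℕ) (hs : #s = n + 1) :
    treeSum s = catalan n * n ! := by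
  induction n using Nat.strong_induction_on generalizing s with
  | _ n ih =>
  rcases n with _ | n
  · obtain ⟨x, rfl⟩ := card_eq_one.mp hs
    simp [treeSum_singleton]
  have hne : s.Nonempty := card_pos.mp (by omega)
  set m := s.max' hne
  have hm : m ∈ s := s.max'_mem hne
  have hterm : ∀ B ∈ (s.erase m).powerset, #B * (treeSum B * treeSum (s \ B)) =
      #B * (catalan (#B - 1) * (#B - 1)! * (catalan (n + 1 - #B) * (n + 1 - #B)!)) := by
    intro B hB
    have hB' : B ⊆ s.erase m := mem_powerset.mp hB
    rcases B.eq_empty_or_nonempty with rfl | hBne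
    · simp
    have hBcard : #B ≤ n + 1 := by
      have := card_le_card hB'
      rwa [card_erase_of_mem hm, hs, Nat.add_sub_cancel] at this
    obtain ⟨k, hk⟩ : ∃ k, #B = k + 1 := ⟨#B - 1, by have := hBne.card_pos; omega⟩
    have hsB : #(s \ B) = (n - k) + 1 := by
      rw [card_sdiff_of_subset (hB'.trans (erase_subset m s)), hs, hk]
      omega
    rw [ih k (by omega) hk, ih (n - k) (by omega) hsB, hk, Nat.add_sub_cancel,
      Nat.add_sub_add_right]
  rw [treeSum_eq_sum_powerset hm (fun x hx ↦ s.le_max' x hx) (by omega), sum_congr rfl hterm,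
    sum_powerset_apply_card (fun k ↦ k * (catalan (k - 1) * (k - 1)! *
      (catalan (n + 1 - k) * (n + 1 - k)!))), card_erase_of_mem hm, hs, Nat.add_sub_cancel]
  exact sum_choose_mul_catalan_mul_factorial n

end Count

theorem weighted_spanning_tree_count (d : ℕ) (hd : 2 ≤ d) :
    (2 * d - 1) * ∑ᶠ G ∈ {G : SimpleGraph (Fin d) | G.IsTree}, graphWeight G =
      Nat.choose (2 * d - 1) (d - 1) * (d - 1).factorial := by
  obtain ⟨n, rfl⟩ : ∃ n, d = n + 1 := ⟨d - 1, by omega⟩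
  have htrees : {G : SimpleGraph (Fin (n + 1)) | G.IsTree} =
      (treesOn (univ : Finset (Fin (n + 1))) : Set _) := by
    ext G
    simp [isTreeOn_univ_iff]
  rw [htrees, finsum_mem_coe_finset, ← treeSum,
    treeSum_eq_catalan_mul_factorial n (by rw [card_univ, Fintype.card_fin]),
    show 2 * (n + 1) - 1 = 2 * n + 1 by omega, Nat.add_sub_cancel, ← mul_assoc,
    two_mul_add_one_mul_catalan]
end

section
/- Let a ≥ 2 be an integer, and define the real constants S₁ = 256a¹⁰ − 1024a⁹ + 1280a⁸ − 1280a⁶ + 1024a⁵ − 256a⁴, S₂ = 384a¹⁰ + 384a⁹ + 768a⁸ − 13824a⁷ + 26496a⁶ − 18048a⁵ + 3072a⁴ + 768a³, and S₃ = 64a¹⁰ − 192a⁹ + 1024a⁸ − 2944a⁷ + 3136a⁶ − 448a⁵ − 1152a⁴ + 512a³. Then S₁ > 0, and the function f(d) = (6S₁d + S₂)/(S₁d + S₃) − 6 − 12/(2ad+1) − 3/(a(a+1)d) is O(1/d²) as the real variable d → ∞; that is, there exist constants C > 0 and d₀ such that |f(d)| ≤ C/d² for all d ≥ d₀. -/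
/-!
Both fractions are Möbius functions of `d`, and
`(p d + q) / (s d + t) = p / s + (q s - p t) / (s² d) + O(d⁻²)`.
Since `S₁ = 256 a⁴ (a - 1)⁵ (a + 1)` and `S₂ - 6 S₃ = 768 a³ (a - 1)⁵ (2a + 3)`,
the `1/d` coefficient of the virtual slope is `(S₂ - 6 S₃) / S₁ = 6/a + 3/(a(a + 1))`,
while that of `12 / (2ad + 1)` is `6/a`; so all terms of order `1/d` cancel.
-/

open Asymptotics Filter

theorem isEquivalent_mul_add_const_atTop {s : ℝ} (hs : s ≠ 0) (t : ℝ) :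
    (fun d : ℝ => s * d + t) ~[atTop] fun d => s * d := by
  refine IsEquivalent.refl.add_isLittleO ?_
  exact (isLittleO_const_id_atTop t).trans_isBigO (isBigO_self_const_mul hs id atTop)

theorem isBigO_inv_mul_add_const_atTop {s : ℝ} (hs : s ≠ 0) (t : ℝ) :
    (fun d : ℝ => (s * d + t)⁻¹) =O[atTop] fun d => d⁻¹ := by
  refine (isEquivalent_mul_add_const_atTop hs t).inv.isBigO.trans ?_
  simpa only [Pi.inv_def, mul_inv] using isBigO_const_mul_self s⁻¹ (fun d : ℝ => d⁻¹) atTop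

theorem eventually_mul_add_const_ne_zero_atTop {s : ℝ} (hs : s ≠ 0) (t : ℝ) :
    ∀ᶠ d : ℝ in atTop, s * d + t ≠ 0 := by
  filter_upwards [(isEquivalent_mul_add_const_atTop hs t).isBigO_symm.eq_zero_imp,
    eventually_ne_atTop 0] with d hzero hd hsum
  exact mul_ne_zero hs hd (hzero hsum)

theorem isBigO_div_mul_add_const_sub_atTop {s : ℝ} (hs : s ≠ 0) (p q t : ℝ) :
    (fun d : ℝ => (p * d + q) / (s * d + t) - p / s - (q * s - p * t) / (s ^ 2 * d))
      =O[atTop] fun d => (d ^ 2)⁻¹ := by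
  have hrem : (fun d : ℝ => d⁻¹ * (s * d + t)⁻¹) =O[atTop] fun d => d⁻¹ * d⁻¹ :=
    (isBigO_refl _ _).mul (isBigO_inv_mul_add_const_atTop hs t)
  refine IsBigO.congr' ((isBigO_const_mul_self (t * (p * t - q * s) / s ^ 2) _ _).trans hrem) ?_ ?_
  · filter_upwards [eventually_mul_add_const_ne_zero_atTop hs t, eventually_ne_atTop 0]
      with d hlin hd
    field_simp
    ring
  · filter_upwards with d
    rw [sq, mul_inv]

theorem exists_bound_div_sq_of_isBigO {f : ℝ → ℝ} (h : f =O[atTop] fun d => (d ^ 2)⁻¹) :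
    ∃ C > (0 : ℝ), ∃ d₀ : ℝ, ∀ d : ℝ, d₀ ≤ d → |f d| ≤ C / d ^ 2 := by
  obtain ⟨C, hC, hbound⟩ := h.exists_pos
  obtain ⟨d₀, hd₀⟩ := eventually_atTop.1 hbound.bound
  refine ⟨C, hC, d₀, fun d hd => ?_⟩
  simpa only [Real.norm_eq_abs, abs_inv, abs_pow, sq_abs, div_eq_mul_inv] using hd₀ d hd

theorem virtual_slope_asymptotics (a : ℤ) (ha : 2 ≤ a) (S₁ S₂ S₃ : ℝ)
    (hS₁ : S₁ = 256 * (a : ℝ) ^ 10 - 1024 * (a : ℝ) ^ 9 + 1280 * (a : ℝ) ^ 8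
      - 1280 * (a : ℝ) ^ 6 + 1024 * (a : ℝ) ^ 5 - 256 * (a : ℝ) ^ 4)
    (hS₂ : S₂ = 384 * (a : ℝ) ^ 10 + 384 * (a : ℝ) ^ 9 + 768 * (a : ℝ) ^ 8
      - 13824 * (a : ℝ) ^ 7 + 26496 * (a : ℝ) ^ 6 - 18048 * (a : ℝ) ^ 5
      + 3072 * (a : ℝ) ^ 4 + 768 * (a : ℝ) ^ 3)
    (hS₃ : S₃ = 64 * (a : ℝ) ^ 10 - 192 * (a : ℝ) ^ 9 + 1024 * (a : ℝ) ^ 8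
      - 2944 * (a : ℝ) ^ 7 + 3136 * (a : ℝ) ^ 6 - 448 * (a : ℝ) ^ 5
      - 1152 * (a : ℝ) ^ 4 + 512 * (a : ℝ) ^ 3) :
    0 < S₁ ∧
    ∃ C > (0 : ℝ), ∃ d₀ : ℝ, ∀ d : ℝ, d₀ ≤ d →
      |(6 * S₁ * d + S₂) / (S₁ * d + S₃) - 6 - 12 / (2 * (a : ℝ) * d + 1)
          - 3 / ((a : ℝ) * ((a : ℝ) + 1) * d)| ≤ C / d ^ 2 := by
  have hA : (1 : ℝ) < a := by exact_mod_cast ha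
  have hS₁_factor : S₁ = 256 * (a : ℝ) ^ 4 * ((a : ℝ) - 1) ^ 5 * ((a : ℝ) + 1) := by
    rw [hS₁]; ring
  have hS₁_pos : 0 < S₁ := by
    have : (0 : ℝ) < (a : ℝ) - 1 := by linarith
    rw [hS₁_factor]; positivity
  have h2A : (2 : ℝ) * a ≠ 0 := by positivity
  refine ⟨hS₁_pos, exists_bound_div_sq_of_isBigO ?_⟩
  refine ((isBigO_div_mul_add_const_sub_atTop hS₁_pos.ne' (6 * S₁) S₂ S₃).sub
    (isBigO_div_mul_add_const_sub_atTop h2A 0 12 1)).congr' ?_ EventuallyEq.rfl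
  filter_upwards [eventually_ne_atTop 0] with d hd
  generalize (6 * S₁ * d + S₂) / (S₁ * d + S₃) = X
  simp only [zero_mul, zero_add, zero_div, sub_zero, mul_one]
  generalize 12 / (2 * (a : ℝ) * d + 1) = Y
  field_simp
  rw [hS₁, hS₂, hS₃]
  ring
end
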